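/- arXiv:2501.05041 — 4 statements merged into one kernel-verified Lean document; each statement's English description precedes it below -/
import Mathlib

section
/- For all natural numbers x ≥ 1 and all reals ρ ≥ 1, there exists a constant C > 0 (depending only on ρ) such that (x!)^ρ ≤ C^x · Γ(ρx). -/
theorem factorial_rpow_le_gamma (ρ : ℝ) (hρ : 1 ≤ ρ) :
    ∃ C > 0, ∀ x : ℕ, 1 ≤ x →
      ((Nat.factorial x : ℝ)) ^ ρ ≤ C ^ x * Real.Gamma (ρ * x) := by
  have hρ0 : (0:ℝ) < ρ := lt_of_lt_of_le one_pos hρ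
  have he1 : (1:ℝ) ≤ Real.exp 1 := by
    have := Real.add_one_le_exp (1:ℝ); linarith
  have h2e : (1:ℝ) ≤ 2 * Real.exp 1 := by nlinarith
  have hΓρ : 0 < Real.Gamma ρ := Real.Gamma_pos_of_pos hρ0
  set C₁ : ℝ := 4 * (2 * Real.exp 1) ^ ρ with hC₁def
  have hC₁pos : 0 < C₁ := by positivity
  refine ⟨max C₁ (Real.Gamma ρ)⁻¹, lt_max_of_lt_left hC₁pos, ?_⟩
  intro x hx
  have hΓpos : ∀ y : ℝ, 0 < y → 0 < Real.Gamma y := fun y hy => Real.Gamma_pos_of_pos hy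
  rcases eq_or_lt_of_le hx with h1 | h2
  · -- x = 1
    obtain rfl : x = 1 := h1.symm
    simp only [Nat.factorial_one, Nat.cast_one, Real.one_rpow, pow_one, Nat.cast_one, mul_one]
    have : (Real.Gamma ρ)⁻¹ * Real.Gamma ρ = 1 := inv_mul_cancel₀ hΓρ.ne'
    calc (1:ℝ) = (Real.Gamma ρ)⁻¹ * Real.Gamma ρ := this.symm
      _ ≤ max C₁ (Real.Gamma ρ)⁻¹ * Real.Gamma ρ :=
        mul_le_mul_of_nonneg_right (le_max_right _ _) hΓρ.le
  · -- x ≥ 2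
    have hx2 : 2 ≤ x := h2
    have hxR : (1:ℝ) ≤ (x:ℝ) := by exact_mod_cast hx
    have hxR2 : (2:ℝ) ≤ (x:ℝ) := by exact_mod_cast hx2
    have hρx : (x:ℝ) ≤ ρ * x := by nlinarith
    have hρx0 : (0:ℝ) ≤ ρ * x := by nlinarith
    set m : ℕ := ⌊ρ * (x:ℝ)⌋₊ with hmdef
    have hmle : (m:ℝ) ≤ ρ * x := Nat.floor_le hρx0
    have hmgt : ρ * x < m + 1 := Nat.lt_floor_add_one _
    have hxm : x ≤ m := Nat.le_floor (by exact_mod_cast hρx)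
    have hm2 : 2 ≤ m := le_trans hx2 hxm
    have hm1 : 1 ≤ m := le_trans one_le_two hm2
    have hmR2 : (2:ℝ) ≤ (m:ℝ) := by exact_mod_cast hm2
    -- Gamma monotone
    have hΓmono : Real.Gamma m ≤ Real.Gamma (ρ * x) :=
      Real.Gamma_strictMonoOn_Ici.monotoneOn (by exact hmR2) (le_trans hmR2 hmle) hmle
    have hΓm : Real.Gamma m = (Nat.factorial (m - 1) : ℝ) := by
      have h : m = (m - 1) + 1 := (Nat.succ_pred_eq_of_pos (lt_of_lt_of_le two_pos hm2)).symm
      have h' : (m:ℝ) = ((m - 1 : ℕ) : ℝ) + 1 := by exact_mod_cast congrArg (Nat.cast : ℕ → ℝ) h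
      rw [h', Real.Gamma_nat_eq_factorial]
    -- factorial lower bound: (m-1)^(m-1) / exp(m-1) ≤ (m-1)!
    have hfac : ((m - 1 : ℕ) : ℝ) ^ (m - 1) / Real.exp (m - 1 : ℕ) ≤ (Nat.factorial (m - 1) : ℝ) := by
      have h := Real.pow_div_factorial_le_exp (x := ((m - 1 : ℕ) : ℝ)) (by positivity) (m - 1)
      have hfpos : (0:ℝ) < (Nat.factorial (m - 1) : ℝ) := by exact_mod_cast Nat.factorial_pos _
      rw [div_le_iff₀ hfpos] at h
      rw [div_le_iff₀ (Real.exp_pos _)]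
      calc ((m - 1 : ℕ) : ℝ) ^ (m - 1) ≤ Real.exp ((m-1:ℕ):ℝ) * (Nat.factorial (m - 1) : ℝ) := h
        _ = (Nat.factorial (m - 1) : ℝ) * Real.exp ((m-1:ℕ):ℝ) := mul_comm _ _
    -- upper bound on (x!)^ρ
    have hup : ((Nat.factorial x : ℝ)) ^ ρ ≤ (x:ℝ) ^ (m + 1) := by
      have h1 : ((Nat.factorial x : ℝ)) ^ ρ ≤ ((x:ℝ) ^ x) ^ ρ := by
        apply Real.rpow_le_rpow (by positivity) _ hρ0.le
        exact_mod_cast Nat.factorial_le_pow x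
      have h2 : ((x:ℝ) ^ x) ^ ρ = (x:ℝ) ^ (ρ * x) := by
        rw [← Real.rpow_natCast (x:ℝ) x, ← Real.rpow_mul (by positivity), mul_comm]
      have h3 : (x:ℝ) ^ (ρ * x) ≤ (x:ℝ) ^ ((m + 1 : ℕ) : ℝ) := by
        apply Real.rpow_le_rpow_of_exponent_le hxR
        push_cast; linarith
      calc ((Nat.factorial x : ℝ)) ^ ρ ≤ ((x:ℝ) ^ x) ^ ρ := h1
        _ = (x:ℝ) ^ (ρ * x) := h2
        _ ≤ (x:ℝ) ^ ((m + 1 : ℕ) : ℝ) := h3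
        _ = (x:ℝ) ^ (m + 1) := Real.rpow_natCast _ _
    -- key: (x:ℝ)^(m+1) * exp(m-1) ≤ C₁^x * (m-1)^(m-1)
    have hkey : (x:ℝ) ^ (m + 1) * Real.exp ((m - 1 : ℕ) : ℝ) ≤ C₁ ^ x * ((m - 1 : ℕ) : ℝ) ^ (m - 1) := by
      have hm1R : (1:ℝ) ≤ ((m - 1 : ℕ) : ℝ) := by
        have : 1 ≤ m - 1 := Nat.le_sub_one_of_lt (lt_of_lt_of_le one_lt_two hm2)
        exact_mod_cast this
      have hxle : (x:ℝ) ≤ 2 * ((m - 1 : ℕ) : ℝ) := by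
        have hmx : (x:ℝ) ≤ (m:ℝ) := by exact_mod_cast hxm
        have : ((m - 1 : ℕ) : ℝ) = (m:ℝ) - 1 := by
          have : (1:ℕ) ≤ m := hm1
          push_cast [this]; ring
        rw [this]; linarith
      have hsplit : (x:ℝ) ^ (m + 1) = (x:ℝ) ^ 2 * (x:ℝ) ^ (m - 1) := by
        rw [← pow_add]
        congr 1
        omega
      have hexp : Real.exp ((m - 1 : ℕ) : ℝ) = Real.exp 1 ^ (m - 1) := by
        rw [← Real.exp_nat_mul, mul_one]
      have hxp : (x:ℝ) ^ (m - 1) ≤ (2 * ((m - 1 : ℕ) : ℝ)) ^ (m - 1) :=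
        pow_le_pow_left₀ (by positivity) hxle _
      have hx2le : (x:ℝ) ^ 2 ≤ 4 ^ x := by
        have h2x : (x:ℝ) ≤ 2 ^ x := by
          exact_mod_cast (Nat.lt_two_pow_self (n := x)).le
        calc (x:ℝ) ^ 2 ≤ (2 ^ x : ℝ) ^ 2 := pow_le_pow_left₀ (by positivity) h2x 2
          _ = 4 ^ x := by rw [← pow_mul, mul_comm, pow_mul]; norm_num
      have h2em : (2 * Real.exp 1) ^ (m - 1) ≤ ((2 * Real.exp 1) ^ ρ) ^ x := by
        have hml : ((m - 1 : ℕ) : ℝ) ≤ ρ * x := by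
          have : ((m - 1 : ℕ) : ℝ) ≤ (m:ℝ) := by exact_mod_cast Nat.sub_le m 1
          linarith
        calc (2 * Real.exp 1) ^ (m - 1) = (2 * Real.exp 1) ^ (((m - 1 : ℕ) : ℝ)) :=
              (Real.rpow_natCast _ _).symm
          _ ≤ (2 * Real.exp 1) ^ (ρ * x) := Real.rpow_le_rpow_of_exponent_le h2e hml
          _ = ((2 * Real.exp 1) ^ ρ) ^ ((x:ℕ):ℝ) := by
              rw [← Real.rpow_mul (by positivity)]
          _ = ((2 * Real.exp 1) ^ ρ) ^ x := Real.rpow_natCast _ _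
      calc (x:ℝ) ^ (m + 1) * Real.exp ((m - 1 : ℕ) : ℝ)
          = (x:ℝ) ^ 2 * ((x:ℝ) ^ (m - 1) * Real.exp 1 ^ (m - 1)) := by
            rw [hsplit, hexp]; ring
        _ ≤ (x:ℝ) ^ 2 * ((2 * ((m - 1 : ℕ) : ℝ)) ^ (m - 1) * Real.exp 1 ^ (m - 1)) := by
            apply mul_le_mul_of_nonneg_left _ (by positivity)
            exact mul_le_mul_of_nonneg_right hxp (by positivity)
        _ = (x:ℝ) ^ 2 * (2 * Real.exp 1) ^ (m - 1) * ((m - 1 : ℕ) : ℝ) ^ (m - 1) := by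
            simp only [mul_pow]; ring
        _ ≤ 4 ^ x * ((2 * Real.exp 1) ^ ρ) ^ x * ((m - 1 : ℕ) : ℝ) ^ (m - 1) := by
            apply mul_le_mul_of_nonneg_right _ (by positivity)
            exact mul_le_mul hx2le h2em (by positivity) (by positivity)
        _ = C₁ ^ x * ((m - 1 : ℕ) : ℝ) ^ (m - 1) := by
            rw [hC₁def, mul_pow]
    -- put it together
    have hCge : C₁ ^ x ≤ (max C₁ (Real.Gamma ρ)⁻¹) ^ x :=
      pow_le_pow_left₀ hC₁pos.le (le_max_left _ _) x
    have hfinal : ((Nat.factorial x : ℝ)) ^ ρ ≤ C₁ ^ x * Real.Gamma (ρ * x) := by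
      have step : ((Nat.factorial x : ℝ)) ^ ρ ≤ C₁ ^ x * ((m - 1 : ℕ) : ℝ) ^ (m - 1) / Real.exp ((m - 1 : ℕ) : ℝ) := by
        rw [le_div_iff₀ (Real.exp_pos _)]
        calc ((Nat.factorial x : ℝ)) ^ ρ * Real.exp ((m - 1 : ℕ) : ℝ)
            ≤ (x:ℝ) ^ (m + 1) * Real.exp ((m - 1 : ℕ) : ℝ) :=
              mul_le_mul_of_nonneg_right hup (Real.exp_pos _).le
          _ ≤ C₁ ^ x * ((m - 1 : ℕ) : ℝ) ^ (m - 1) := hkey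
      calc ((Nat.factorial x : ℝ)) ^ ρ
          ≤ C₁ ^ x * ((m - 1 : ℕ) : ℝ) ^ (m - 1) / Real.exp ((m - 1 : ℕ) : ℝ) := step
        _ = C₁ ^ x * (((m - 1 : ℕ) : ℝ) ^ (m - 1) / Real.exp ((m - 1 : ℕ) : ℝ)) := by ring
        _ ≤ C₁ ^ x * (Nat.factorial (m - 1) : ℝ) :=
            mul_le_mul_of_nonneg_left hfac (by positivity)
        _ = C₁ ^ x * Real.Gamma m := by rw [hΓm]
        _ ≤ C₁ ^ x * Real.Gamma (ρ * x) := mul_le_mul_of_nonneg_left hΓmono (by positivity)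
    calc ((Nat.factorial x : ℝ)) ^ ρ ≤ C₁ ^ x * Real.Gamma (ρ * x) := hfinal
      _ ≤ (max C₁ (Real.Gamma ρ)⁻¹) ^ x * Real.Gamma (ρ * x) :=
          mul_le_mul_of_nonneg_right hCge (hΓpos _ (by positivity)).le
end

section
/- Suppose f ∈ C^∞(𝕋ⁿ) has zero mean ∫_{𝕋ⁿ} f dφ = 0 and Fourier coefficients f_k decaying sub-exponentially: |f_k| ≤ A·exp(-c|k|^{1/σ}) for some A, c > 0, σ > 1. Let ω ∈ ℝⁿ satisfy |⟨k,ω⟩| ≥ κ/Δ(|k|) for all nonzero k ∈ ℤⁿ, where Δ is nondecreasing, Δ ≥ 1, and satisfies sup_{t≥0} Δ(t) e^{-(c/2) t^{1/σ}} ≤ Γ* < ∞. Then the function u(φ) = ∑_{k≠0} f_k/(i⟨k,ω⟩) e^{i⟨k,φ⟩} is a well-defined continuous function solving ⟨ω, ∂_φ u⟩ = f, with sup norm ‖u‖_∞ ≤ (A·Γ*/κ)·∑_{k≠0} exp(-(c/2)|k|^{1/σ}), and the last sum is finite. -/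
set_option maxHeartbeats 1000000

open Real in
lemma aux_summable_nat {b α : ℝ} (hb : 0 < b) (hα : 0 < α) :
    Summable fun m : ℕ => Real.exp (-b * (m : ℝ) ^ α) := by
  obtain ⟨j, hj⟩ : ∃ j : ℕ, 2 / α ≤ j := exists_nat_ge _
  have hαj : 2 ≤ α * j := by
    rw [div_le_iff₀ hα] at hj; linarith [hj]
  rw [← summable_nat_add_iff 1]
  have hsum : Summable fun m : ℕ => ((Nat.factorial j : ℝ) / b ^ j) * ((m + 1 : ℕ) : ℝ) ^ (-(α * j)) := by
    exact Summable.mul_left _ ((summable_nat_add_iff 1).2 (Real.summable_nat_rpow.2 (by linarith)))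
  refine Summable.of_nonneg_of_le (fun m => (Real.exp_pos _).le) (fun m => ?_) hsum
  set x : ℝ := ((m + 1 : ℕ) : ℝ) with hxdef
  have hxpos : 0 < x := by rw [hxdef]; exact_mod_cast Nat.succ_pos m
  have hy : 0 < b * x ^ α := mul_pos hb (Real.rpow_pos_of_pos hxpos α)
  have h1 : (b * x ^ α) ^ j / (Nat.factorial j : ℝ) ≤ Real.exp (b * x ^ α) := by
    calc (b * x ^ α) ^ j / (Nat.factorial j : ℝ) ≤ ∑ i ∈ Finset.range (j + 1), (b * x ^ α) ^ i / (Nat.factorial i) := by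
          refine Finset.single_le_sum (f := fun i => (b * x ^ α) ^ i / (Nat.factorial i))
            (fun i _ => by positivity) (Finset.self_mem_range_succ j)
      _ ≤ Real.exp (b * x ^ α) := Real.sum_le_exp_of_nonneg hy.le _
  have hpow : 0 < (b * x ^ α) ^ j / (Nat.factorial j : ℝ) := by positivity
  have h2 : Real.exp (-(b * x ^ α)) ≤ ((b * x ^ α) ^ j / (Nat.factorial j : ℝ))⁻¹ := by
    rw [Real.exp_neg]
    exact inv_anti₀ hpow h1
  have h3 : ((b * x ^ α) ^ j / (Nat.factorial j : ℝ))⁻¹ = ((Nat.factorial j : ℝ) / b ^ j) * x ^ (-(α * j)) := by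
    rw [Real.rpow_neg hxpos.le, Real.rpow_mul hxpos.le, Real.rpow_natCast]
    field_simp
    ring_nf
  calc Real.exp (-b * x ^ α) = Real.exp (-(b * x ^ α)) := by ring_nf
    _ ≤ ((Nat.factorial j : ℝ) / b ^ j) * x ^ (-(α * j)) := h3 ▸ h2

lemma aux_summable_int {b α : ℝ} (hb : 0 < b) (hα : 0 < α) :
    Summable fun j : ℤ => Real.exp (-b * ((|j| : ℤ) : ℝ) ^ α) := by
  apply Summable.of_nat_of_neg
  · simpa using aux_summable_nat hb hα
  · simpa using aux_summable_nat hb hα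

lemma aux_summable_pi (n : ℕ) {b α : ℝ} (hb : 0 < b) (hα : 0 < α) :
    Summable fun k : Fin n → ℤ => ∏ i, Real.exp (-b * ((|k i| : ℤ) : ℝ) ^ α) := by
  induction n with
  | zero =>
      exact Summable.of_finite
  | succ n ih =>
      have h := (aux_summable_int hb hα (b := b) (α := α)).mul_of_nonneg ih
        (fun _ => (Real.exp_pos _).le)
        (fun _ => Finset.prod_nonneg fun i _ => (Real.exp_pos _).le)
      rw [← (Fin.consEquiv (fun _ => ℤ)).summable_iff]
      convert h using 1
      funext p
      simp only [Function.comp, Fin.consEquiv_apply]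
      rw [Fin.prod_univ_succ]
      simp

lemma aux_summable_main (n : ℕ) {b α : ℝ} (hb : 0 < b) (hα : 0 < α) :
    Summable fun k : Fin n → ℤ => Real.exp (-b * (((∑ i, |k i| : ℤ) : ℝ)) ^ α) := by
  rcases Nat.eq_zero_or_pos n with h0 | hn
  · subst h0; exact Summable.of_finite
  · have hb' : 0 < b / n := div_pos hb (by exact_mod_cast hn)
    refine Summable.of_nonneg_of_le (fun k => (Real.exp_pos _).le) (fun k => ?_)
      (aux_summable_pi n hb' hα)
    rw [← Real.exp_sum]
    apply Real.exp_le_exp.2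
    have hS : (0:ℝ) ≤ ((∑ i, |k i| : ℤ) : ℝ) := by
      exact_mod_cast Finset.sum_nonneg fun i _ => abs_nonneg (k i)
    have hle : ∀ i : Fin n, ((|k i| : ℤ) : ℝ) ^ α ≤ (((∑ i, |k i| : ℤ) : ℝ)) ^ α := by
      intro i
      apply Real.rpow_le_rpow (by positivity) _ hα.le
      exact_mod_cast Finset.single_le_sum (f := fun i => |k i|)
        (fun i _ => abs_nonneg (k i)) (Finset.mem_univ i)
    have hsum : ∑ i : Fin n, ((|k i| : ℤ) : ℝ) ^ α ≤ n * (((∑ i, |k i| : ℤ) : ℝ)) ^ α := by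
      calc ∑ i : Fin n, ((|k i| : ℤ) : ℝ) ^ α
          ≤ ∑ _i : Fin n, (((∑ i, |k i| : ℤ) : ℝ)) ^ α := Finset.sum_le_sum fun i _ => hle i
        _ = n * (((∑ i, |k i| : ℤ) : ℝ)) ^ α := by simp [Finset.sum_const, nsmul_eq_mul]
    have hn' : (0:ℝ) < n := by exact_mod_cast hn
    calc -b * (((∑ i, |k i| : ℤ) : ℝ)) ^ α
        = -(b/n) * (n * (((∑ i, |k i| : ℤ) : ℝ)) ^ α) := by field_simp
      _ ≤ ∑ i : Fin n, -(b/n) * ((|k i| : ℤ) : ℝ) ^ α := by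
          rw [← Finset.mul_sum]
          exact mul_le_mul_of_nonpos_left hsum (by simp [hb'.le])

theorem homological_equation_solution (n : ℕ) (σ A c κ Γstar : ℝ)
    (hσ : 1 < σ) (hA : 0 < A) (hc : 0 < c) (hκ : 0 < κ)
    (fc : (Fin n → ℤ) → ℂ) (f : (Fin n → ℝ) → ℂ) (ω : Fin n → ℝ) (Δ : ℝ → ℝ)
    (hmean : fc 0 = 0)
    (hfc : ∀ k : Fin n → ℤ,
      ‖fc k‖ ≤ A * Real.exp (-c * (((∑ i, |k i| : ℤ) : ℝ)) ^ (1/σ)))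
    (hΔmono : MonotoneOn Δ (Set.Ici 0)) (hΔ1 : ∀ t ≥ (0:ℝ), 1 ≤ Δ t)
    (hΔsup : ∀ t ≥ (0:ℝ), Δ t * Real.exp (-(c/2) * t ^ (1/σ)) ≤ Γstar)
    (hsd : ∀ k : Fin n → ℤ, k ≠ 0 →
      κ / Δ (((∑ i, |k i| : ℤ) : ℝ)) ≤ |∑ i, (k i : ℝ) * ω i|)
    (hf : ∀ φ : Fin n → ℝ, f φ = ∑' k : Fin n → ℤ,
      fc k * Complex.exp (Complex.I * ((∑ i, (k i : ℝ) * φ i : ℝ) : ℂ))) :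
    let u : (Fin n → ℝ) → ℂ := fun φ => ∑' k : Fin n → ℤ,
      if k = 0 then 0
      else fc k / (Complex.I * ((∑ i, (k i : ℝ) * ω i : ℝ) : ℂ)) *
        Complex.exp (Complex.I * ((∑ i, (k i : ℝ) * φ i : ℝ) : ℂ))
    Summable (fun k : {k : Fin n → ℤ // k ≠ 0} =>
      Real.exp (-(c/2) * (((∑ i, |k.1 i| : ℤ) : ℝ)) ^ (1/σ))) ∧
    Continuous u ∧
    (∀ φ : Fin n → ℝ,
      HasDerivAt (fun s : ℝ => u (fun i => φ i + s * ω i)) (f φ) 0) ∧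
    (∀ φ : Fin n → ℝ, ‖u φ‖ ≤ A * Γstar / κ *
      ∑' k : {k : Fin n → ℤ // k ≠ 0},
        Real.exp (-(c/2) * (((∑ i, |k.1 i| : ℤ) : ℝ)) ^ (1/σ))) := by
  intro u
  have hσpos : (0:ℝ) < σ := lt_trans one_pos hσ
  have hp : (0:ℝ) < 1/σ := by positivity
  set F : (Fin n → ℤ) → ℝ :=
    fun k => Real.exp (-(c/2) * (((∑ i, |k i| : ℤ) : ℝ)) ^ (1/σ)) with hFdef
  have hFpos : ∀ k, 0 < F k := fun k => Real.exp_pos _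
  have hFsum : Summable F := aux_summable_main n (by positivity) hp
  -- norm of the exponential factor
  have hexp1 : ∀ t : ℝ, ‖Complex.exp (Complex.I * (t : ℂ))‖ = 1 := by
    intro t
    rw [Complex.norm_exp]
    simp
  -- pointwise bound on terms
  have hbnd : ∀ k : Fin n → ℤ, k ≠ 0 → ∀ t : ℝ,
      ‖fc k / (Complex.I * ((∑ i, (k i : ℝ) * ω i : ℝ) : ℂ)) *
        Complex.exp (Complex.I * (t : ℂ))‖ ≤ A * Γstar / κ * F k := by
    intro k hk t
    have hS0 : (0:ℝ) ≤ ((∑ i, |k i| : ℤ) : ℝ) := by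
      exact_mod_cast Finset.sum_nonneg fun i _ => abs_nonneg (k i)
    set S : ℝ := ((∑ i, |k i| : ℤ) : ℝ)
    set b : ℝ := ∑ i, (k i : ℝ) * ω i with hbdef
    have hΔpos : 0 < Δ S := lt_of_lt_of_le one_pos (hΔ1 S hS0)
    have hb : κ / Δ S ≤ |b| := hsd k hk
    have hbpos : 0 < |b| := lt_of_lt_of_le (div_pos hκ hΔpos) hb
    have hnorm : ‖fc k / (Complex.I * (b : ℂ)) * Complex.exp (Complex.I * (t : ℂ))‖
        = ‖fc k‖ / |b| := by
      rw [norm_mul, hexp1, mul_one, norm_div, norm_mul, Complex.norm_I, one_mul,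
        Complex.norm_real, Real.norm_eq_abs]
    rw [hnorm]
    set E : ℝ := Real.exp (-(c/2) * S ^ (1/σ)) with hEdef
    have hEpos : 0 < E := Real.exp_pos _
    have hsplit : Real.exp (-c * S ^ (1/σ)) = E * E := by
      rw [hEdef, ← Real.exp_add]; ring_nf
    have hΓ : Δ S * E ≤ Γstar := hΔsup S hS0
    have h1 : ‖fc k‖ / |b| ≤ ‖fc k‖ * (Δ S / κ) := by
      have h2 : 1/|b| ≤ 1/(κ / Δ S) := one_div_le_one_div_of_le (div_pos hκ hΔpos) hb
      calc ‖fc k‖ / |b| = ‖fc k‖ * (1/|b|) := by ring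
        _ ≤ ‖fc k‖ * (1/(κ / Δ S)) := mul_le_mul_of_nonneg_left h2 (norm_nonneg _)
        _ = ‖fc k‖ * (Δ S / κ) := by rw [one_div_div]
    have hFk : F k = E := rfl
    calc ‖fc k‖ / |b| ≤ ‖fc k‖ * (Δ S / κ) := h1
      _ ≤ (A * Real.exp (-c * S ^ (1/σ))) * (Δ S / κ) :=
          mul_le_mul_of_nonneg_right (hfc k) (by positivity)
      _ = A * E / κ * (Δ S * E) := by rw [hsplit]; ring
      _ ≤ A * E / κ * Γstar := mul_le_mul_of_nonneg_left hΓ (by positivity)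
      _ = A * Γstar / κ * E := by ring
      _ = A * Γstar / κ * F k := by rw [hFk]
  -- bound including the `if`
  have hbnd' : ∀ (k : Fin n → ℤ) (t : ℝ),
      ‖(if k = 0 then 0
        else fc k / (Complex.I * ((∑ i, (k i : ℝ) * ω i : ℝ) : ℂ)) *
          Complex.exp (Complex.I * (t : ℂ)))‖ ≤ A * Γstar / κ * F k := by
    intro k t
    by_cases hk : k = 0
    · have hΓ1 : 1 ≤ Γstar := by
        have h := hΔsup 0 le_rfl
        rw [Real.zero_rpow (ne_of_gt hp), mul_zero, Real.exp_zero, mul_one] at h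
        exact le_trans (hΔ1 0 le_rfl) h
      simp only [if_pos hk, norm_zero]
      positivity
    · rw [if_neg hk]; exact hbnd k hk t
  have hBsum : Summable fun k => A * Γstar / κ * F k := hFsum.mul_left _
  refine ⟨?_, ?_, ?_, ?_⟩
  · exact hFsum.comp_injective Subtype.val_injective
  · apply continuous_tsum (u := fun k => A * Γstar / κ * F k) ?_ hBsum (fun k φ => hbnd' k _)
    intro k
    by_cases hk : k = 0
    · simp only [if_pos hk]; exact continuous_const
    · simp only [if_neg hk]
      exact continuous_const.mul (Complex.continuous_exp.comp
        (continuous_const.mul (Complex.continuous_ofReal.comp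
          (continuous_finset_sum _ fun i _ => continuous_const.mul (continuous_apply i)))))
  · intro φ
    set θ : (Fin n → ℤ) → ℝ := fun k => ∑ i, (k i : ℝ) * φ i with hθdef
    set B : (Fin n → ℤ) → ℝ := fun k => ∑ i, (k i : ℝ) * ω i with hBdef
    set g : (Fin n → ℤ) → ℝ → ℂ := fun k s =>
      if k = 0 then 0
      else fc k / (Complex.I * ((B k : ℝ) : ℂ)) *
        Complex.exp (Complex.I * ((θ k + s * B k : ℝ) : ℂ)) with hgdef
    set g' : (Fin n → ℤ) → ℝ → ℂ := fun k s =>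
      fc k * Complex.exp (Complex.I * ((θ k + s * B k : ℝ) : ℂ)) with hg'def
    have hderiv : ∀ (k : Fin n → ℤ) (s : ℝ), HasDerivAt (g k) (g' k s) s := by
      intro k s
      by_cases hk : k = 0
      · have hgk : g k = fun _ => 0 := by funext t; simp [hgdef, hk]
        have hg'k : g' k s = 0 := by simp [hg'def, hk, hmean]
        rw [hgk, hg'k]
        exact hasDerivAt_const s 0
      · have hS0 : (0:ℝ) ≤ ((∑ i, |k i| : ℤ) : ℝ) := by
          exact_mod_cast Finset.sum_nonneg fun i _ => abs_nonneg (k i)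
        have hΔpos : 0 < Δ (((∑ i, |k i| : ℤ) : ℝ)) := lt_of_lt_of_le one_pos (hΔ1 _ hS0)
        have hbpos : 0 < |B k| := lt_of_lt_of_le (div_pos hκ hΔpos) (hsd k hk)
        have hbne : B k ≠ 0 := fun h => by simp [h] at hbpos
        have hIb : Complex.I * ((B k : ℝ) : ℂ) ≠ 0 :=
          mul_ne_zero Complex.I_ne_zero (Complex.ofReal_ne_zero.2 hbne)
        have h2 : ∀ t : ℝ, Complex.I * ((θ k + t * B k : ℝ) : ℂ)
            = Complex.I * ((θ k : ℝ) : ℂ) + (t : ℂ) * (Complex.I * ((B k : ℝ) : ℂ)) := by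
          intro t; push_cast; ring
        have h3 : HasDerivAt (fun z : ℂ => Complex.exp
              (Complex.I * ((θ k : ℝ) : ℂ) + z * (Complex.I * ((B k : ℝ) : ℂ))))
            (Complex.exp (Complex.I * ((θ k : ℝ) : ℂ)
              + (s : ℂ) * (Complex.I * ((B k : ℝ) : ℂ))) * (Complex.I * ((B k : ℝ) : ℂ)))
            (s : ℂ) := by
          have := (((hasDerivAt_id (s : ℂ)).mul_const
            (Complex.I * ((B k : ℝ) : ℂ))).const_add (Complex.I * ((θ k : ℝ) : ℂ))).cexp
          simpa using this
        have h4 := h3.comp_ofReal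
        have key : HasDerivAt (fun t : ℝ => Complex.exp (Complex.I * ((θ k + t * B k : ℝ) : ℂ)))
            ((Complex.I * ((B k : ℝ) : ℂ)) *
              Complex.exp (Complex.I * ((θ k + s * B k : ℝ) : ℂ))) s := by
          simp only [h2]
          simpa [mul_comm] using h4
        have h5 := key.const_mul (fc k / (Complex.I * ((B k : ℝ) : ℂ)))
        have hgk : g k = fun t => fc k / (Complex.I * ((B k : ℝ) : ℂ)) *
            Complex.exp (Complex.I * ((θ k + t * B k : ℝ) : ℂ)) := by
          funext t; simp [hgdef, hk]
        rw [hgk]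
        refine h5.congr_deriv ?_
        rw [hg'def]
        field_simp
        exact mul_div_cancel_right₀ _ (Complex.ofReal_ne_zero.2 hbne)
    have hbound : ∀ (k : Fin n → ℤ) (s : ℝ), ‖g' k s‖ ≤ A * F k := by
      intro k s
      have hS0 : (0:ℝ) ≤ ((∑ i, |k i| : ℤ) : ℝ) := by
        exact_mod_cast Finset.sum_nonneg fun i _ => abs_nonneg (k i)
      have hrp : (0:ℝ) ≤ (((∑ i, |k i| : ℤ) : ℝ)) ^ (1/σ) := Real.rpow_nonneg hS0 _
      have hmono : Real.exp (-c * (((∑ i, |k i| : ℤ) : ℝ)) ^ (1/σ)) ≤ F k := by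
        rw [hFdef]
        apply Real.exp_le_exp.2
        nlinarith
      calc ‖g' k s‖ = ‖fc k‖ := by
            rw [hg'def]; simp only []
            rw [norm_mul, hexp1, mul_one]
        _ ≤ A * Real.exp (-c * (((∑ i, |k i| : ℤ) : ℝ)) ^ (1/σ)) := hfc k
        _ ≤ A * F k := mul_le_mul_of_nonneg_left hmono hA.le
    have hg0 : Summable fun k => g k 0 := by
      apply Summable.of_norm_bounded hBsum
      intro k
      exact hbnd' k _
    have hmain := hasDerivAt_tsum (hFsum.mul_left A) hderiv hbound hg0 0
    have hfun : (fun s : ℝ => u (fun i => φ i + s * ω i)) = fun s => ∑' k, g k s := by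
      funext s
      show (∑' k : Fin n → ℤ, _) = _
      apply tsum_congr
      intro k
      have hrew : (∑ i, (k i : ℝ) * (φ i + s * ω i)) = θ k + s * B k := by
        rw [hθdef, hBdef]
        simp only [mul_add, Finset.sum_add_distrib, Finset.mul_sum]
        congr 1
        apply Finset.sum_congr rfl
        intro i _
        ring
      rw [hgdef]
      by_cases hk : k = 0
      · simp [hk]
      · simp only [if_neg hk, hrew, hBdef]
    have hval : (∑' k, g' k 0) = f φ := by
      rw [hf φ]
      apply tsum_congr
      intro k
      rw [hg'def]
      norm_num [hθdef]
    rw [hfun, ← hval]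
    exact hmain
  · intro φ
    have hsn : Summable fun k : Fin n → ℤ =>
        ‖(if k = 0 then 0
          else fc k / (Complex.I * ((∑ i, (k i : ℝ) * ω i : ℝ) : ℂ)) *
            Complex.exp (Complex.I * ((∑ i, (k i : ℝ) * φ i : ℝ) : ℂ)))‖ :=
      Summable.of_nonneg_of_le (fun _ => norm_nonneg _) (fun k => hbnd' k _) hBsum
    have hsupp : Function.support (fun k : Fin n → ℤ =>
        ‖(if k = 0 then 0
          else fc k / (Complex.I * ((∑ i, (k i : ℝ) * ω i : ℝ) : ℂ)) *
            Complex.exp (Complex.I * ((∑ i, (k i : ℝ) * φ i : ℝ) : ℂ)))‖)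
        ⊆ {k : Fin n → ℤ | k ≠ 0} := by
      intro k hk
      simp only [Function.mem_support] at hk
      intro h0
      exact hk (by simp [h0])
    calc ‖u φ‖ ≤ ∑' k : Fin n → ℤ,
        ‖(if k = 0 then 0
          else fc k / (Complex.I * ((∑ i, (k i : ℝ) * ω i : ℝ) : ℂ)) *
            Complex.exp (Complex.I * ((∑ i, (k i : ℝ) * φ i : ℝ) : ℂ)))‖ :=
          norm_tsum_le_tsum_norm hsn
      _ = ∑' k : {k : Fin n → ℤ // k ≠ 0},
        ‖(if k.1 = 0 then 0
          else fc k.1 / (Complex.I * ((∑ i, (k.1 i : ℝ) * ω i : ℝ) : ℂ)) *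
            Complex.exp (Complex.I * ((∑ i, (k.1 i : ℝ) * φ i : ℝ) : ℂ)))‖ :=
          (tsum_subtype_eq_of_support_subset hsupp).symm
      _ ≤ ∑' k : {k : Fin n → ℤ // k ≠ 0}, A * Γstar / κ * F k.1 := by
          refine Summable.tsum_le_tsum (fun k => hbnd' k.1 _)
            (hsn.comp_injective Subtype.val_injective)
            (hBsum.comp_injective Subtype.val_injective)
      _ = A * Γstar / κ * ∑' k : {k : Fin n → ℤ // k ≠ 0}, F k.1 := tsum_mul_left
end

section
/- Let ω: E → ℝⁿ be smooth on E ⊆ ℝⁿ and satisfy |D^α ω(I)| ≤ C₁^{|α|} (α!)^{ρ+1} for all multi-indices α and |⟨ω(I), k⟩| ≥ κ/Δ(|k|) for all nonzero k ∈ ℤⁿ and all I ∈ E, where ρ ≥ 1, κ > 0, and Δ ≥ 1 is nondecreasing. Then there exists C₀ > 0 depending only on n, κ, C₁ such that for all I ∈ E, nonzero k ∈ ℤⁿ, and multi-indices α: |D^α(⟨ω(I),k⟩^{-1})| ≤ C₀^{|α|+1} · α! · max_{0≤j≤|α|} [ ((|α|-j)!)^ρ · |k|^j · Δ(|k|)^{j+1}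 ]. -/
/-- Partial derivative in the `i`-th coordinate direction. -/
noncomputable def pderiv {n : ℕ} (i : Fin n) (f : (Fin n → ℝ) → ℝ) :
    (Fin n → ℝ) → ℝ :=
  fun x => fderiv ℝ f x (Pi.single i 1)

/-- Multi-index partial derivative D^α. -/
noncomputable def mpderiv {n : ℕ} (α : Fin n → ℕ) (f : (Fin n → ℝ) → ℝ) :
    (Fin n → ℝ) → ℝ :=
  (List.finRange n).foldr (fun i g => (pderiv i)^[α i] g) f

namespace SDB

variable {n : ℕ}

noncomputable def F (L : List (Fin n)) (α : Fin n → ℕ) (f : (Fin n → ℝ) → ℝ) :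
    (Fin n → ℝ) → ℝ :=
  L.foldr (fun i g => (pderiv i)^[α i] g) f

lemma mpderiv_eq_F (α : Fin n → ℕ) (f) : mpderiv α f = F (List.finRange n) α f := rfl

lemma F_nil (α : Fin n → ℕ) (f) : F ([] : List (Fin n)) α f = f := rfl

lemma F_cons (i : Fin n) (L α f) : F (i :: L) α f = (pderiv i)^[α i] (F L α f) := rfl

lemma F_congr {L : List (Fin n)} {α α' : Fin n → ℕ} (f) (h : ∀ j ∈ L, α j = α' j) :
    F L α f = F L α' f := by
  induction L with
  | nil => rfl
  | cons i T ih =>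
    rw [F_cons, F_cons, ih (fun j hj => h j (List.mem_cons_of_mem _ hj)),
      h i List.mem_cons_self]

lemma F_zero {L : List (Fin n)} {α : Fin n → ℕ} (f) (h : ∀ j ∈ L, α j = 0) :
    F L α f = f := by
  induction L with
  | nil => rfl
  | cons i T ih =>
    rw [F_cons, h i List.mem_cons_self]
    simpa using ih (fun j hj => h j (List.mem_cons_of_mem _ hj))

lemma mpderiv_zero (f : (Fin n → ℝ) → ℝ) : mpderiv (0 : Fin n → ℕ) f = f :=
  F_zero f (fun _ _ => rfl)

lemma F_peel {L : List (Fin n)} (hL : L.Pairwise (· < ·)) {i : Fin n} (hiL : i ∈ L)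
    {α : Fin n → ℕ} (h0 : ∀ j < i, α j = 0) (hi : α i ≠ 0) (f : (Fin n → ℝ) → ℝ) :
    F L α f = pderiv i (F L (α - Pi.single i 1) f) := by
  induction L with
  | nil => simp at hiL
  | cons j T ih =>
    rcases List.mem_cons.1 hiL with rfl | hiT
    · have hjT : i ∉ T := fun hmem => lt_irrefl i ((List.pairwise_cons.1 hL).1 i hmem)
      have hT : F T α f = F T (α - Pi.single i 1) f := by
        refine F_congr f (fun m hm => ?_)
        have hne : m ≠ i := fun h => hjT (h ▸ hm)
        simp [Pi.single_apply, hne.symm]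
      obtain ⟨m, hm⟩ := Nat.exists_eq_succ_of_ne_zero hi
      have hαj : (α - Pi.single i 1 : Fin n → ℕ) i = m := by simp [hm]
      rw [F_cons, F_cons, hαj, ← hT, hm, Function.iterate_succ_apply']
    · have hji : j < i := (List.pairwise_cons.1 hL).1 i hiT
      have hαj0 : α j = 0 := h0 j hji
      have hαj0' : (α - Pi.single i 1 : Fin n → ℕ) j = 0 := by
        simp [Pi.single_apply, hαj0]
      rw [F_cons, F_cons, hαj0, hαj0']
      simpa using ih (List.pairwise_cons.1 hL).2 hiT

lemma mpderiv_peel {α : Fin n → ℕ} {i : Fin n} (h0 : ∀ j < i, α j = 0) (hi : α i ≠ 0)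
    (f : (Fin n → ℝ) → ℝ) :
    mpderiv α f = pderiv i (mpderiv (α - Pi.single i 1) f) :=
  F_peel (List.pairwise_lt_finRange n) (List.mem_finRange i) h0 hi f

lemma exists_min_nonzero {α : Fin n → ℕ} (h : α ≠ 0) :
    ∃ i, (∀ j < i, α j = 0) ∧ α i ≠ 0 := by
  classical
  have hne : (Finset.univ.filter (fun i => α i ≠ 0)).Nonempty := by
    by_contra hc
    rw [Finset.not_nonempty_iff_eq_empty] at hc
    refine h (funext fun i => ?_)
    simp only [Pi.zero_apply]
    by_contra hi
    have : i ∈ Finset.univ.filter (fun i => α i ≠ 0) :=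
      Finset.mem_filter.2 ⟨Finset.mem_univ i, hi⟩
    simp [hc] at this
  refine ⟨Finset.min' _ hne, fun j hj => ?_,
    (Finset.mem_filter.1 (Finset.min'_mem _ hne)).2⟩
  by_contra hj0
  exact absurd (Finset.min'_le _ j (Finset.mem_filter.2 ⟨Finset.mem_univ j, hj0⟩))
    (not_le.2 hj)


variable {U : Set (Fin n → ℝ)}

lemma pderiv_contDiffOn (hU : IsOpen U) {f : (Fin n → ℝ) → ℝ} (hf : ContDiffOn ℝ (⊤ : ℕ∞) f U) (i : Fin n) :
    ContDiffOn ℝ (⊤ : ℕ∞) (pderiv i f) U :=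
  (hf.fderiv_of_isOpen hU (by simp)).clm_apply contDiffOn_const

lemma iterate_pderiv_contDiffOn (hU : IsOpen U) {f : (Fin n → ℝ) → ℝ} (hf : ContDiffOn ℝ (⊤ : ℕ∞) f U)
    (i : Fin n) : ∀ m, ContDiffOn ℝ (⊤ : ℕ∞) ((pderiv i)^[m] f) U
  | 0 => hf
  | (m + 1) => by
    rw [Function.iterate_succ_apply']
    exact pderiv_contDiffOn hU (iterate_pderiv_contDiffOn hU hf i m) i

lemma F_contDiffOn (hU : IsOpen U) {f : (Fin n → ℝ) → ℝ} (hf : ContDiffOn ℝ (⊤ : ℕ∞) f U) (L : List (Fin n))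
    (α : Fin n → ℕ) : ContDiffOn ℝ (⊤ : ℕ∞) (F L α f) U := by
  induction L with
  | nil => rw [F_nil]; exact hf
  | cons i T ih => rw [F_cons]; exact iterate_pderiv_contDiffOn hU ih i _

lemma mpderiv_contDiffOn (hU : IsOpen U) {f : (Fin n → ℝ) → ℝ} (hf : ContDiffOn ℝ (⊤ : ℕ∞) f U)
    (α : Fin n → ℕ) : ContDiffOn ℝ (⊤ : ℕ∞) (mpderiv α f) U := by
  have := F_contDiffOn hU hf (List.finRange n) α
  rwa [← mpderiv_eq_F] at this

lemma diffAt (hU : IsOpen U) {f : (Fin n → ℝ) → ℝ} (hf : ContDiffOn ℝ (⊤ : ℕ∞) f U) {x} (hx : x ∈ U) :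
    DifferentiableAt ℝ f x :=
  (hf.differentiableOn (by simp)).differentiableAt (hU.mem_nhds hx)

lemma pderiv_congrOn (hU : IsOpen U) {f g : (Fin n → ℝ) → ℝ} (h : Set.EqOn f g U) (i : Fin n) :
    Set.EqOn (pderiv i f) (pderiv i g) U := fun x hx => by
  show fderiv ℝ f x _ = fderiv ℝ g x _
  rw [Filter.EventuallyEq.fderiv_eq (Filter.eventuallyEq_of_mem (hU.mem_nhds hx) h)]

lemma iterate_pderiv_congrOn (hU : IsOpen U) {f g : (Fin n → ℝ) → ℝ} (h : Set.EqOn f g U) (i : Fin n) :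
    ∀ m, Set.EqOn ((pderiv i)^[m] f) ((pderiv i)^[m] g) U
  | 0 => h
  | (m + 1) => by
    rw [Function.iterate_succ_apply', Function.iterate_succ_apply']
    exact pderiv_congrOn hU (iterate_pderiv_congrOn hU h i m) i

lemma F_congrOn (hU : IsOpen U) {f g : (Fin n → ℝ) → ℝ} (h : Set.EqOn f g U) (L : List (Fin n))
    (α : Fin n → ℕ) : Set.EqOn (F L α f) (F L α g) U := by
  induction L with
  | nil => rw [F_nil, F_nil]; exact h
  | cons i T ih => rw [F_cons, F_cons]; exact iterate_pderiv_congrOn hU ih i _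

lemma mpderiv_congrOn (hU : IsOpen U) {f g : (Fin n → ℝ) → ℝ} (h : Set.EqOn f g U) (α : Fin n → ℕ) :
    Set.EqOn (mpderiv α f) (mpderiv α g) U := by
  have := F_congrOn hU h (List.finRange n) α
  rwa [← mpderiv_eq_F, ← mpderiv_eq_F] at this

lemma pderiv_fun_sum {ι : Type*} {s : Finset ι} {A : ι → (Fin n → ℝ) → ℝ}
    {x : Fin n → ℝ} (h : ∀ j ∈ s, DifferentiableAt ℝ (A j) x) (i : Fin n) :
    pderiv i (fun y => ∑ j ∈ s, A j y) x = ∑ j ∈ s, pderiv i (A j) x := by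
  show fderiv ℝ _ x _ = _
  rw [fderiv_fun_sum h]
  simp [pderiv]

lemma pderiv_fun_mul {f g : (Fin n → ℝ) → ℝ} {x} (hf : DifferentiableAt ℝ f x)
    (hg : DifferentiableAt ℝ g x) (i : Fin n) :
    pderiv i (fun y => f y * g y) x = pderiv i f x * g x + f x * pderiv i g x := by
  show fderiv ℝ _ x _ = _
  rw [fderiv_fun_mul hf hg]
  simp [pderiv]
  ring

lemma pderiv_fun_const_mul {c : ℝ} {f : (Fin n → ℝ) → ℝ} {x}
    (hf : DifferentiableAt ℝ f x) (i : Fin n) :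
    pderiv i (fun y => c * f y) x = c * pderiv i f x := by
  show fderiv ℝ _ x _ = _
  rw [fderiv_const_mul hf]
  simp [pderiv]

lemma pderiv_const (c : ℝ) (i : Fin n) :
    pderiv i (fun _ => c) = fun _ => (0:ℝ) := by
  funext x
  show fderiv ℝ _ x _ = _
  simp

lemma sum_sub {α β : Fin n → ℕ} (h : β ≤ α) :
    ∑ j, (α - β : Fin n → ℕ) j + ∑ j, β j = ∑ j, α j := by
  rw [← Finset.sum_add_distrib]
  exact Finset.sum_congr rfl fun j _ => Nat.sub_add_cancel (h j)

lemma single_le {α : Fin n → ℕ} {i : Fin n} (hi : α i ≠ 0) :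
    (Pi.single i 1 : Fin n → ℕ) ≤ α := fun j => by
  rcases eq_or_ne j i with rfl | hne
  · simpa [Pi.single_apply] using Nat.one_le_iff_ne_zero.2 hi
  · simp [Pi.single_apply, hne]

lemma sum_single_one (i : Fin n) : ∑ j, (Pi.single i 1 : Fin n → ℕ) j = 1 := by
  simp [Pi.single_apply]

lemma sum_sub_single_lt {α : Fin n → ℕ} {i : Fin n} (hi : α i ≠ 0) :
    ∑ j, (α - Pi.single i 1 : Fin n → ℕ) j < ∑ j, α j := by
  have h := sum_sub (single_le hi)
  rw [sum_single_one] at h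
  omega

lemma mpderiv_const_aux (m : ℕ) : ∀ {α : Fin n → ℕ}, ∑ i, α i = m → α ≠ 0 →
    ∀ c : ℝ, mpderiv α (fun _ => c) = fun _ => (0:ℝ) := by
  induction m using Nat.strong_induction_on with
  | _ m IH =>
    intro α hm hα c
    obtain ⟨i, h0, hi⟩ := exists_min_nonzero hα
    rw [mpderiv_peel h0 hi]
    by_cases hz : (α - Pi.single i 1 : Fin n → ℕ) = 0
    · rw [hz, mpderiv_zero, pderiv_const]
    · rw [IH _ (hm ▸ sum_sub_single_lt hi) rfl hz c, pderiv_const]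

lemma mpderiv_const {α : Fin n → ℕ} (hα : α ≠ 0) (c : ℝ) :
    mpderiv α (fun _ => c) = fun _ => (0:ℝ) :=
  mpderiv_const_aux (∑ i, α i) rfl hα c

lemma mpderiv_sum_aux (hU : IsOpen U) {ι : Type} (s : Finset ι) (c : ι → ℝ)
    (f : ι → (Fin n → ℝ) → ℝ) (hf : ∀ j ∈ s, ContDiffOn ℝ (⊤ : ℕ∞) (f j) U) (m : ℕ) :
    ∀ {α : Fin n → ℕ}, ∑ i, α i = m →
    Set.EqOn (mpderiv α (fun x => ∑ j ∈ s, c j * f j x))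
      (fun x => ∑ j ∈ s, c j * mpderiv α (f j) x) U := by
  induction m using Nat.strong_induction_on with
  | _ m IH =>
    intro α hm
    by_cases hα : α = 0
    · subst hα
      intro x hx
      simp only [mpderiv_zero]
    · obtain ⟨i, h0, hi⟩ := exists_min_nonzero hα
      set α' : Fin n → ℕ := α - Pi.single i 1 with hα'def
      have hIH : Set.EqOn (mpderiv α' (fun x => ∑ j ∈ s, c j * f j x))
          (fun x => ∑ j ∈ s, c j * mpderiv α' (f j) x) U :=
        IH _ (hm ▸ sum_sub_single_lt hi) rfl
      intro x hx
      rw [mpderiv_peel h0 hi, pderiv_congrOn hU hIH i hx]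
      have hdiff : ∀ j ∈ s, DifferentiableAt ℝ (fun y => c j * mpderiv α' (f j) y) x :=
        fun j hj => (diffAt hU (mpderiv_contDiffOn hU (hf j hj) α') hx).const_mul (c j)
      rw [pderiv_fun_sum (A := fun j => fun y => c j * mpderiv α' (f j) y) hdiff i]
      refine Finset.sum_congr rfl fun j hj => ?_
      rw [pderiv_fun_const_mul (diffAt hU (mpderiv_contDiffOn hU (hf j hj) α') hx) i,
        ← mpderiv_peel h0 hi]

lemma mpderiv_sum (hU : IsOpen U) {ι : Type} (s : Finset ι) (c : ι → ℝ)
    (f : ι → (Fin n → ℝ) → ℝ) (hf : ∀ j ∈ s, ContDiffOn ℝ (⊤ : ℕ∞) (f j) U) (α : Fin n → ℕ) :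
    Set.EqOn (mpderiv α (fun x => ∑ j ∈ s, c j * f j x))
      (fun x => ∑ j ∈ s, c j * mpderiv α (f j) x) U :=
  mpderiv_sum_aux hU s c f hf (∑ i, α i) rfl

lemma choose_pascal_pi {α γ : Fin n → ℕ} {i : Fin n} (hi : α i ≠ 0) :
    ∏ j, (α j).choose (γ j)
      = (∏ j, ((α - Pi.single i 1 : Fin n → ℕ) j).choose (γ j))
        + (if γ i = 0 then 0 else
            ∏ j, ((α - Pi.single i 1 : Fin n → ℕ) j).choose
              ((γ - Pi.single i 1 : Fin n → ℕ) j)) := by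
  classical
  rw [Fintype.prod_eq_mul_prod_compl i, Fintype.prod_eq_mul_prod_compl i,
    Fintype.prod_eq_mul_prod_compl i]
  have hP1 : ∏ j ∈ ({i}ᶜ : Finset (Fin n)),
      ((α - Pi.single i 1 : Fin n → ℕ) j).choose (γ j)
      = ∏ j ∈ ({i}ᶜ : Finset (Fin n)), (α j).choose (γ j) := by
    refine Finset.prod_congr rfl fun j hj => ?_
    have hne : j ≠ i := by simpa using hj
    simp [Pi.single_apply, hne]
  have hP2 : ∏ j ∈ ({i}ᶜ : Finset (Fin n)),
      ((α - Pi.single i 1 : Fin n → ℕ) j).choose ((γ - Pi.single i 1 : Fin n → ℕ) j)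
      = ∏ j ∈ ({i}ᶜ : Finset (Fin n)), (α j).choose (γ j) := by
    refine Finset.prod_congr rfl fun j hj => ?_
    have hne : j ≠ i := by simpa using hj
    simp [Pi.single_apply, hne]
  rw [hP1, hP2]
  have hsubi : (α - Pi.single i 1 : Fin n → ℕ) i = α i - 1 := by simp
  rcases Nat.eq_zero_or_pos (γ i) with hγ0 | hγpos
  · rw [if_pos hγ0, hγ0]
    simp [hsubi]
  · rw [if_neg (Nat.pos_iff_ne_zero.1 hγpos)]
    have hγsubi : (γ - Pi.single i 1 : Fin n → ℕ) i = γ i - 1 := by simp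
    rw [hsubi, hγsubi]
    obtain ⟨t, ht⟩ := Nat.exists_eq_succ_of_ne_zero hi
    obtain ⟨u, hu⟩ := Nat.exists_eq_succ_of_ne_zero (Nat.pos_iff_ne_zero.1 hγpos)
    rw [ht, hu]
    simp only [Nat.succ_sub_one]
    rw [Nat.choose_succ_succ]
    ring
lemma pascal_sum {α : Fin n → ℕ} {i : Fin n} (hi : α i ≠ 0)
    (A B : (Fin n → ℕ) → ℝ) :
    ∑ γ ∈ Finset.Iic α, ((∏ j, (α j).choose (γ j) : ℕ) : ℝ) * (A γ * B (α - γ))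
      = ∑ β ∈ Finset.Iic (α - Pi.single i 1 : Fin n → ℕ),
          ((∏ j, ((α - Pi.single i 1 : Fin n → ℕ) j).choose (β j) : ℕ) : ℝ) *
            (A (β + Pi.single i 1) * B (α - (β + Pi.single i 1)))
        + ∑ β ∈ Finset.Iic (α - Pi.single i 1 : Fin n → ℕ),
            ((∏ j, ((α - Pi.single i 1 : Fin n → ℕ) j).choose (β j) : ℕ) : ℝ) *
              (A β * B (α - β)) := by
  classical
  set e : Fin n → ℕ := Pi.single i 1 with hedef
  set α' : Fin n → ℕ := α - e with hα'def
  have key : ∀ γ ∈ Finset.Iic α,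
      ((∏ j, (α j).choose (γ j) : ℕ) : ℝ) * (A γ * B (α - γ))
        = ((∏ j, (α' j).choose (γ j) : ℕ) : ℝ) * (A γ * B (α - γ))
          + (if γ i = 0 then (0:ℝ) else
              ((∏ j, (α' j).choose ((γ - e : Fin n → ℕ) j) : ℕ) : ℝ) *
                (A γ * B (α - γ))) := by
    intro γ hγ
    rw [choose_pascal_pi hi (γ := γ)]
    push_cast
    split_ifs <;> push_cast <;> ring
  rw [Finset.sum_congr rfl key, Finset.sum_add_distrib]
  have h1 : ∑ γ ∈ Finset.Iic α, ((∏ j, (α' j).choose (γ j) : ℕ) : ℝ) * (A γ * B (α - γ))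
      = ∑ β ∈ Finset.Iic α', ((∏ j, (α' j).choose (β j) : ℕ) : ℝ) * (A β * B (α - β)) := by
    refine (Finset.sum_subset (Finset.Iic_subset_Iic.2 (fun j => Nat.sub_le _ _)) ?_).symm
    intro γ hγ hγ'
    have hγα : γ ≤ α := Finset.mem_Iic.1 hγ
    have hnle : ¬ γ ≤ α' := fun hle => hγ' (Finset.mem_Iic.2 hle)
    have hfail : α' i < γ i := by
      by_contra hc
      refine hnle (fun j => ?_)
      rcases eq_or_ne j i with rfl | hne
      · exact Nat.le_of_not_lt hc
      · have hαj : α' j = α j := by simp [hα'def, hedef, Pi.single_apply, hne]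
        rw [hαj]; exact hγα j
    have hzero : (α' i).choose (γ i) = 0 := Nat.choose_eq_zero_of_lt hfail
    rw [show (∏ j, (α' j).choose (γ j)) = 0 from
      Finset.prod_eq_zero (Finset.mem_univ i) hzero]
    simp
  have h2 : ∑ γ ∈ Finset.Iic α, (if γ i = 0 then (0:ℝ) else
        ((∏ j, (α' j).choose ((γ - e : Fin n → ℕ) j) : ℕ) : ℝ) * (A γ * B (α - γ)))
      = ∑ β ∈ Finset.Iic α', ((∏ j, (α' j).choose (β j) : ℕ) : ℝ) *
          (A (β + e) * B (α - (β + e))) := by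
    have hswap : ∀ γ : Fin n → ℕ, (if γ i = 0 then (0:ℝ) else
        ((∏ j, (α' j).choose ((γ - e : Fin n → ℕ) j) : ℕ) : ℝ) * (A γ * B (α - γ)))
        = (if γ i ≠ 0 then
            ((∏ j, (α' j).choose ((γ - e : Fin n → ℕ) j) : ℕ) : ℝ) * (A γ * B (α - γ))
          else 0) := fun γ => by
      by_cases h : γ i = 0 <;> simp [h]
    rw [Finset.sum_congr rfl (fun γ _ => hswap γ), ← Finset.sum_filter]
    refine Finset.sum_bij' (fun γ _ => (γ - e : Fin n → ℕ))
      (fun β _ => (β + e : Fin n → ℕ)) ?_ ?_ ?_ ?_ ?_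
    · intro γ hγ
      obtain ⟨hγα, _⟩ := Finset.mem_filter.1 hγ
      exact Finset.mem_Iic.2 (fun j => Nat.sub_le_sub_right (Finset.mem_Iic.1 hγα j) _)
    · intro β hβ
      have hβle : β ≤ α' := Finset.mem_Iic.1 hβ
      have hαi : 1 ≤ α i := Nat.one_le_iff_ne_zero.2 hi
      refine Finset.mem_filter.2 ⟨Finset.mem_Iic.2 (fun j => ?_), ?_⟩
      · show β j + e j ≤ α j
        rcases eq_or_ne j i with rfl | hne
        · have h1 : β j ≤ α j - 1 := by
            simpa [hα'def, hedef, Pi.single_apply] using hβle j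
          have h2 : e j = 1 := by simp [hedef]
          omega
        · have h1 : β j ≤ α j := by
            simpa [hα'def, hedef, Pi.single_apply, hne] using hβle j
          have h2 : e j = 0 := by simp [hedef, Pi.single_apply, hne]
          omega
      · show (β + e : Fin n → ℕ) i ≠ 0
        have h2 : e i = 1 := by simp [hedef]
        show β i + e i ≠ 0
        omega
    · intro γ hγ
      obtain ⟨_, hγi⟩ := Finset.mem_filter.1 hγ
      show ((γ - e : Fin n → ℕ) + e : Fin n → ℕ) = γ
      funext j
      show (γ j - e j) + e j = γ j
      rcases eq_or_ne j i with rfl | hne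
      · have h2 : e j = 1 := by simp [hedef]
        have h3 : γ j ≠ 0 := hγi
        omega
      · have h2 : e j = 0 := by simp [hedef, Pi.single_apply, hne]
        omega
    · intro β hβ
      show ((β + e : Fin n → ℕ) - e : Fin n → ℕ) = β
      funext j
      show (β j + e j) - e j = β j
      omega
    · intro γ hγ
      obtain ⟨_, hγi⟩ := Finset.mem_filter.1 hγ
      have hback : ((γ - e : Fin n → ℕ) + e : Fin n → ℕ) = γ := by
        funext j
        show (γ j - e j) + e j = γ j
        rcases eq_or_ne j i with rfl | hne
        · have h2 : e j = 1 := by simp [hedef]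
          have h3 : γ j ≠ 0 := hγi
          omega
        · have h2 : e j = 0 := by simp [hedef, Pi.single_apply, hne]
          omega
      show _ = ((∏ j, (α' j).choose (((γ - e : Fin n → ℕ)) j) : ℕ) : ℝ) *
          (A ((γ - e : Fin n → ℕ) + e) * B (α - ((γ - e : Fin n → ℕ) + e)))
      rw [hback]
  rw [h1, h2, add_comm]

lemma mpderiv_leibniz_aux (hU : IsOpen U) {f g : (Fin n → ℝ) → ℝ}
    (hf : ContDiffOn ℝ (⊤ : ℕ∞) f U) (hg : ContDiffOn ℝ (⊤ : ℕ∞) g U) (m : ℕ) :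
    ∀ {α : Fin n → ℕ}, ∑ i, α i = m →
    Set.EqOn (mpderiv α (fun y => f y * g y))
      (fun x => ∑ β ∈ Finset.Iic α,
        ((∏ j, (α j).choose (β j) : ℕ) : ℝ) *
          (mpderiv β f x * mpderiv (α - β) g x)) U := by
  induction m using Nat.strong_induction_on with
  | _ m IH =>
    intro α hm
    by_cases hα : α = 0
    · subst hα
      intro x hx
      have hIic : Finset.Iic (0 : Fin n → ℕ) = {0} := by
        ext γ
        simp only [Finset.mem_Iic, Finset.mem_singleton]
        constructor
        · intro h
          exact le_antisymm h (fun j => Nat.zero_le _)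
        · rintro rfl
          exact le_refl _
      simp [hIic, mpderiv_zero]
    · obtain ⟨i, h0, hi⟩ := exists_min_nonzero hα
      have hnz : ∀ β : Fin n → ℕ, β ≤ (α - Pi.single i 1 : Fin n → ℕ) →
          ∀ j < i, β j = 0 := by
        intro β hβ j hj
        have h1 : (α - Pi.single i 1 : Fin n → ℕ) j = 0 := by
          show α j - _ = 0
          rw [h0 j hj]
          exact Nat.zero_sub _
        exact Nat.le_zero.1 (h1 ▸ hβ j)
      have hIH := IH _ (hm ▸ sum_sub_single_lt hi)
        (α := (α - Pi.single i 1 : Fin n → ℕ)) rfl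
      intro x hx
      rw [mpderiv_peel h0 hi, pderiv_congrOn hU hIH i hx]
      have hdf : ∀ β : Fin n → ℕ, DifferentiableAt ℝ (mpderiv β f) x :=
        fun β => diffAt hU (mpderiv_contDiffOn hU hf β) hx
      have hdg : ∀ β : Fin n → ℕ, DifferentiableAt ℝ (mpderiv β g) x :=
        fun β => diffAt hU (mpderiv_contDiffOn hU hg β) hx
      have hdiff : ∀ β ∈ Finset.Iic (α - Pi.single i 1 : Fin n → ℕ),
          DifferentiableAt ℝ (fun y =>
            ((∏ j, ((α - Pi.single i 1 : Fin n → ℕ) j).choose (β j) : ℕ) : ℝ) *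
              (mpderiv β f y * mpderiv ((α - Pi.single i 1 : Fin n → ℕ) - β) g y)) x :=
        fun β _ => ((hdf β).mul (hdg _)).const_mul _
      rw [pderiv_fun_sum (A := fun β => fun y =>
        ((∏ j, ((α - Pi.single i 1 : Fin n → ℕ) j).choose (β j) : ℕ) : ℝ) *
          (mpderiv β f y * mpderiv ((α - Pi.single i 1 : Fin n → ℕ) - β) g y)) hdiff i]
      have hterm : ∀ β ∈ Finset.Iic (α - Pi.single i 1 : Fin n → ℕ),
          pderiv i (fun y =>
            ((∏ j, ((α - Pi.single i 1 : Fin n → ℕ) j).choose (β j) : ℕ) : ℝ) *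
              (mpderiv β f y * mpderiv ((α - Pi.single i 1 : Fin n → ℕ) - β) g y)) x
          = ((∏ j, ((α - Pi.single i 1 : Fin n → ℕ) j).choose (β j) : ℕ) : ℝ) *
              (mpderiv (β + Pi.single i 1) f x *
                mpderiv (α - (β + Pi.single i 1)) g x)
            + ((∏ j, ((α - Pi.single i 1 : Fin n → ℕ) j).choose (β j) : ℕ) : ℝ) *
                (mpderiv β f x * mpderiv (α - β) g x) := by
        intro β hβ
        have hβle : β ≤ (α - Pi.single i 1 : Fin n → ℕ) := Finset.mem_Iic.1 hβ
        have hcm := pderiv_fun_const_mul (c := ((∏ j, ((α - Pi.single i 1 : Fin n → ℕ) j).choose (β j) : ℕ) : ℝ)) (f := fun y => mpderiv β f y * mpderiv ((α - Pi.single i 1 : Fin n → ℕ) - β) g y) ((hdf β).mul (hdg _)) i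
        beta_reduce at hcm
        rw [hcm,
          pderiv_fun_mul (hdf β) (hdg _) i]
        -- peel identity for f
        have hA : pderiv i (mpderiv β f) x = mpderiv (β + Pi.single i 1) f x := by
          have hc1 : ∀ j < i, (β + Pi.single i 1 : Fin n → ℕ) j = 0 := by
            intro j hj
            show β j + (Pi.single i 1 : Fin n → ℕ) j = 0
            have := hnz β hβle j hj
            have h2 : (Pi.single i 1 : Fin n → ℕ) j = 0 := by
              simp [Pi.single_apply, Fin.ne_of_lt hj]
            omega
          have hc2 : (β + Pi.single i 1 : Fin n → ℕ) i ≠ 0 := by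
            show β i + (Pi.single i 1 : Fin n → ℕ) i ≠ 0
            simp
          have hml := mpderiv_peel hc1 hc2 f
          have hsub : ((β + Pi.single i 1 : Fin n → ℕ) - Pi.single i 1 : Fin n → ℕ)
              = β := by
            funext j
            show (β j + (Pi.single i 1 : Fin n → ℕ) j) - (Pi.single i 1 : Fin n → ℕ) j = β j
            omega
          rw [hsub] at hml
          rw [← hml]
        -- peel identity for g
        have hB : pderiv i (mpderiv ((α - Pi.single i 1 : Fin n → ℕ) - β) g) x
            = mpderiv (α - β) g x := by
          have hc1 : ∀ j < i, (α - β : Fin n → ℕ) j = 0 := by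
            intro j hj
            show α j - β j = 0
            rw [h0 j hj]
            exact Nat.zero_sub _
          have hc2 : (α - β : Fin n → ℕ) i ≠ 0 := by
            show α i - β i ≠ 0
            have h1 : β i ≤ α i - 1 := by
              have := hβle i
              simpa [Pi.single_apply] using this
            have h2 : 1 ≤ α i := Nat.one_le_iff_ne_zero.2 hi
            omega
          have hml := mpderiv_peel hc1 hc2 g
          have hsub : ((α - β : Fin n → ℕ) - Pi.single i 1 : Fin n → ℕ)
              = ((α - Pi.single i 1 : Fin n → ℕ) - β) := by
            funext j
            show (α j - β j) - (Pi.single i 1 : Fin n → ℕ) j = (α j - (Pi.single i 1 : Fin n → ℕ) j) - β j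
            omega
          rw [hsub] at hml
          rw [← hml]
        have hC : (α - Pi.single i 1 : Fin n → ℕ) - β
            = α - (β + Pi.single i 1) := by
          funext j
          show (α j - (Pi.single i 1 : Fin n → ℕ) j) - β j = α j - (β j + (Pi.single i 1 : Fin n → ℕ) j)
          omega
        rw [hA, hB]
        rw [hC]
        ring
      rw [Finset.sum_congr rfl hterm, Finset.sum_add_distrib]
      exact (pascal_sum hi (fun β => mpderiv β f x) (fun β => mpderiv β g x)).symm

lemma mpderiv_leibniz (hU : IsOpen U) {f g : (Fin n → ℝ) → ℝ}
    (hf : ContDiffOn ℝ (⊤ : ℕ∞) f U) (hg : ContDiffOn ℝ (⊤ : ℕ∞) g U) (α : Fin n → ℕ)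
    {x : Fin n → ℝ} (hx : x ∈ U) :
    mpderiv α (fun y => f y * g y) x
      = ∑ β ∈ Finset.Iic α, ((∏ j, (α j).choose (β j) : ℕ) : ℝ) *
          (mpderiv β f x * mpderiv (α - β) g x) :=
  mpderiv_leibniz_aux hU hf hg (∑ i, α i) rfl hx

lemma key_fact {s m j : ℕ} (hs : 1 ≤ s) (hsj : s + j ≤ m) {P : ℕ}
    (hP : P ≤ s.factorial) :
    P * (m - s - j).factorial ≤ 2 ^ s * (m - 1 - j).factorial := by
  have h1 : (s - 1).factorial * (m - s - j).factorial ≤ (m - 1 - j).factorial := by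
    have hd := Nat.factorial_mul_factorial_dvd_factorial_add (s - 1) (m - s - j)
    have heq : (s - 1) + (m - s - j) = m - 1 - j := by omega
    rw [heq] at hd
    exact Nat.le_of_dvd (Nat.factorial_pos _) hd
  have h2 : s.factorial = s * (s - 1).factorial := by
    conv_lhs => rw [show s = (s - 1) + 1 by omega]
    rw [Nat.factorial_succ]
    congr 2
    omega
  have h3 : s ≤ 2 ^ s := Nat.le_of_lt Nat.lt_two_pow_self
  calc P * (m - s - j).factorial ≤ s.factorial * (m - s - j).factorial :=
        Nat.mul_le_mul_right _ hP
    _ = s * ((s - 1).factorial * (m - s - j).factorial) := by rw [h2, Nat.mul_assoc]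
    _ ≤ 2 ^ s * (m - 1 - j).factorial := Nat.mul_le_mul h3 h1

lemma two_pow_rpow (s : ℕ) (ρ : ℝ) : ((2:ℝ) ^ s) ^ ρ = ((2:ℝ) ^ ρ) ^ s := by
  rw [← Real.rpow_natCast 2 s, ← Real.rpow_mul (by norm_num), mul_comm,
    Real.rpow_mul (by norm_num), Real.rpow_natCast]

lemma prod_fact_le_fact_sum (β : Fin n → ℕ) :
    ∏ i, (β i).factorial ≤ (∑ i, β i).factorial :=
  Nat.le_of_dvd (Nat.factorial_pos _)
    (Nat.prod_factorial_dvd_factorial_sum _ _)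

lemma geom_pi_sum_le (α : Fin n → ℕ) :
    ∑ β ∈ Finset.Iic α, ((1:ℝ)/2) ^ (∑ i, β i) ≤ 2 ^ n := by
  classical
  have hIic : Finset.Iic α = Fintype.piFinset fun i => Finset.Iic (α i) := rfl
  have hterm : ∀ β ∈ Finset.Iic α,
      ((1:ℝ)/2) ^ (∑ i, β i) = ∏ i, ((1:ℝ)/2) ^ (β i) := fun β _ =>
    (Finset.prod_pow_eq_pow_sum _ _ _).symm
  rw [Finset.sum_congr rfl hterm, hIic, ← Finset.prod_univ_sum]
  have hfac : ∀ i : Fin n, ∑ b ∈ Finset.Iic (α i), ((1:ℝ)/2) ^ b ≤ 2 := by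
    intro i
    have hr : Finset.Iic (α i) = Finset.range (α i + 1) := by
      ext b
      simp [Nat.lt_succ_iff]
    rw [hr]
    exact sum_geometric_two_le _
  calc ∏ i : Fin n, ∑ b ∈ Finset.Iic (α i), ((1:ℝ)/2) ^ b
      ≤ ∏ _i : Fin n, (2:ℝ) := by
        refine Finset.prod_le_prod (fun i _ => ?_) (fun i _ => hfac i)
        positivity
    _ = 2 ^ n := by simp

lemma pow_small {x : ℝ} (hx0 : 0 ≤ x) (hx : x ≤ 1/2) {s : ℕ} (hs : 1 ≤ s) :
    x ^ s ≤ 2 * x * (1/2) ^ s := by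
  obtain ⟨t, rfl⟩ : ∃ t, s = t + 1 := ⟨s - 1, by omega⟩
  have h1 : x ^ t ≤ (1/2 : ℝ) ^ t := pow_le_pow_left₀ hx0 hx t
  have h2 : (2:ℝ) * x * (1/2) ^ (t+1) = x * (1/2) ^ t := by ring
  rw [h2, pow_succ']
  calc x * x ^ t ≤ x * (1/2) ^ t := by
        exact mul_le_mul_of_nonneg_left h1 hx0

lemma inverse_bound {ρ κ C₁ C₂ C₀ K D : ℝ}
    (hρ : 1 ≤ ρ) (hκ : 0 < κ) (hC₁ : 0 < C₁) (hC₂def : C₂ = C₁ * 2 ^ ρ)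
    (hC₀pos : 0 < C₀) (hC₀1 : 2 * C₂ ≤ C₀) (hC₀2 : 2 ^ (n + 1) * C₂ / κ ≤ C₀)
    (hC₀3 : 1 / κ ≤ C₀) (hK : 1 ≤ K) (hD : 1 ≤ D)
    {U : Set (Fin n → ℝ)} (hU : IsOpen U)
    {l : (Fin n → ℝ) → ℝ} (hl : ContDiffOn ℝ (⊤ : ℕ∞) l U) (hU0 : ∀ x ∈ U, l x ≠ 0)
    {I : Fin n → ℝ} (hIU : I ∈ U) (hlI : κ / D ≤ |l I|)
    (hlder : ∀ β : Fin n → ℕ, |mpderiv β l I| ≤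
      K * (C₁ ^ (∑ i, β i) * ((∏ i, (β i).factorial : ℕ) : ℝ) ^ (ρ + 1))) :
    ∀ m : ℕ, ∀ α : Fin n → ℕ, ∑ i, α i = m →
      |mpderiv α (fun x => (l x)⁻¹) I| ≤
        C₀ ^ (m + 1) * ((∏ i, (α i).factorial : ℕ) : ℝ) *
          (Finset.range (m + 1)).sup'
            (Finset.nonempty_range_iff.mpr (Nat.succ_ne_zero _))
            (fun j => ((Nat.factorial (m - j) : ℝ)) ^ ρ * K ^ j * D ^ (j + 1)) := by
  classical
  have hρ0 : (0:ℝ) ≤ ρ := le_trans zero_le_one hρ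
  have hK0 : (0:ℝ) < K := lt_of_lt_of_le one_pos hK
  have hD0 : (0:ℝ) < D := lt_of_lt_of_le one_pos hD
  have h2ρ : (0:ℝ) < 2 ^ ρ := Real.rpow_pos_of_pos two_pos ρ
  have hC₂pos : 0 < C₂ := hC₂def ▸ mul_pos hC₁ h2ρ
  have hκD : 0 < κ / D := div_pos hκ hD0
  have hg : ContDiffOn ℝ (⊤ : ℕ∞) (fun x => (l x)⁻¹) U := hl.inv hU0
  have hgI : |(l I)⁻¹| ≤ D / κ := by
    rw [abs_inv]
    have h := inv_anti₀ hκD hlI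
    rwa [inv_div] at h
  intro m
  induction m using Nat.strong_induction_on with
  | _ m IH =>
    intro α hm
    by_cases hα : α = 0
    · subst hα
      have hm0 : m = 0 := by simpa using hm.symm
      subst hm0
      rw [mpderiv_zero]
      have hfac : ((∏ i, ((0 : Fin n → ℕ) i).factorial : ℕ) : ℝ) = 1 := by simp
      rw [hfac, mul_one]
      have h0r : (0:ℕ) ∈ Finset.range (0+1) := by simp
      have hsupD : D ≤ (Finset.range (0+1)).sup'
          (Finset.nonempty_range_iff.mpr (Nat.succ_ne_zero _))
          (fun j => ((Nat.factorial (0 - j) : ℝ)) ^ ρ * K ^ j * D ^ (j + 1)) := by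
        refine le_trans (le_of_eq ?_) (Finset.le_sup'
          (f := fun j => ((Nat.factorial (0 - j) : ℝ)) ^ ρ * K ^ j * D ^ (j + 1)) h0r)
        simp [Real.one_rpow]
      calc |(l I)⁻¹| ≤ D / κ := hgI
        _ = D * (1 / κ) := by ring
        _ ≤ D * C₀ := mul_le_mul_of_nonneg_left hC₀3 (le_of_lt hD0)
        _ = C₀ ^ (0 + 1) * D := by ring
        _ ≤ C₀ ^ (0 + 1) * (Finset.range (0+1)).sup'
            (Finset.nonempty_range_iff.mpr (Nat.succ_ne_zero _))
            (fun j => ((Nat.factorial (0 - j) : ℝ)) ^ ρ * K ^ j * D ^ (j + 1)) :=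
          mul_le_mul_of_nonneg_left hsupD (by positivity)
    · -- main inductive case
      have hm1 : 1 ≤ m := by
        obtain ⟨i0, _, hi0⟩ := exists_min_nonzero hα
        calc 1 ≤ α i0 := Nat.one_le_iff_ne_zero.2 hi0
          _ ≤ ∑ i, α i := Finset.single_le_sum (fun i _ => Nat.zero_le _)
              (Finset.mem_univ i0)
          _ = m := hm
      set Msup : ℝ := (Finset.range (m + 1)).sup'
          (Finset.nonempty_range_iff.mpr (Nat.succ_ne_zero _))
          (fun j => ((Nat.factorial (m - j) : ℝ)) ^ ρ * K ^ j * D ^ (j + 1))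
        with hMdef
      have hMpos : 0 < Msup := by
        rw [hMdef]
        have h0 : (0 : ℕ) ∈ Finset.range (m + 1) := Finset.mem_range.2 (by omega)
        refine lt_of_lt_of_le ?_ (Finset.le_sup'
          (f := fun j => ((Nat.factorial (m - j) : ℝ)) ^ ρ * K ^ j * D ^ (j + 1)) h0)
        have : (0:ℝ) < ((Nat.factorial (m - 0) : ℝ)) ^ ρ :=
          Real.rpow_pos_of_pos (by exact_mod_cast Nat.factorial_pos _) ρ
        positivity
      -- Leibniz identity
      have hprod1 : Set.EqOn (fun y => l y * (l y)⁻¹) (fun _ => (1:ℝ)) U :=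
        fun y hy => mul_inv_cancel₀ (hU0 y hy)
      have hz : mpderiv α (fun y => l y * (l y)⁻¹) I = 0 := by
        calc mpderiv α (fun y => l y * (l y)⁻¹) I
            = mpderiv α (fun _ => (1:ℝ)) I := mpderiv_congrOn hU hprod1 α hIU
          _ = 0 := by rw [mpderiv_const hα 1]
      have hsum0 : ∑ β ∈ Finset.Iic α,
          ((∏ j, (α j).choose (β j) : ℕ) : ℝ) *
            (mpderiv β l I * mpderiv (α - β) (fun x => (l x)⁻¹) I) = 0 := by
        rw [← mpderiv_leibniz hU hl hg α hIU]
        exact hz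
      have h0mem : (0 : Fin n → ℕ) ∈ Finset.Iic α :=
        Finset.mem_Iic.2 (fun j => Nat.zero_le _)
      have hsplit := Finset.add_sum_erase (Finset.Iic α)
        (fun β => ((∏ j, (α j).choose (β j) : ℕ) : ℝ) *
          (mpderiv β l I * mpderiv (α - β) (fun x => (l x)⁻¹) I)) h0mem
      rw [hsum0] at hsplit
      have hf0 : ((∏ j, (α j).choose ((0 : Fin n → ℕ) j) : ℕ) : ℝ) *
          (mpderiv 0 l I * mpderiv (α - 0) (fun x => (l x)⁻¹) I)
          = l I * mpderiv α (fun x => (l x)⁻¹) I := by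
        have hα0 : (α - 0 : Fin n → ℕ) = α := by
          funext j
          show α j - (0 : Fin n → ℕ) j = α j
          simp
        rw [hα0, mpderiv_zero]
        simp
      beta_reduce at hsplit
      rw [hf0] at hsplit
      set Rest : ℝ := ∑ β ∈ (Finset.Iic α).erase 0,
        ((∏ j, (α j).choose (β j) : ℕ) : ℝ) *
          (mpderiv β l I * mpderiv (α - β) (fun x => (l x)⁻¹) I) with hRdef
      have heq : l I * mpderiv α (fun x => (l x)⁻¹) I = -Rest := by linarith
      have habsX : |mpderiv α (fun x => (l x)⁻¹) I| * (κ / D) ≤ |Rest| := by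
        calc |mpderiv α (fun x => (l x)⁻¹) I| * (κ / D)
            ≤ |mpderiv α (fun x => (l x)⁻¹) I| * |l I| :=
              mul_le_mul_of_nonneg_left hlI (abs_nonneg _)
          _ = |l I * mpderiv α (fun x => (l x)⁻¹) I| := by
              rw [abs_mul]; ring
          _ = |Rest| := by rw [heq, abs_neg]
      have hX : |mpderiv α (fun x => (l x)⁻¹) I| ≤ D / κ * |Rest| := by
        have h := mul_le_mul_of_nonneg_right habsX (le_of_lt (div_pos hD0 hκ))
        have hsimp : |mpderiv α (fun x => (l x)⁻¹) I| * (κ / D) * (D / κ)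
            = |mpderiv α (fun x => (l x)⁻¹) I| := by
          field_simp
        rw [hsimp] at h
        linarith
      -- per-term bound
      have hterm : ∀ β ∈ (Finset.Iic α).erase 0,
          ((∏ j, (α j).choose (β j) : ℕ) : ℝ) * |mpderiv β l I| *
              |mpderiv (α - β) (fun x => (l x)⁻¹) I| * D ≤
            ((∏ i, (α i).factorial : ℕ) : ℝ) * Msup *
              (C₂ ^ (∑ i, β i) * C₀ ^ (m - (∑ i, β i) + 1)) := by
        intro β hβ
        have hβmem : β ∈ Finset.Iic α := Finset.mem_of_mem_erase hβ
        have hβle : β ≤ α := Finset.mem_Iic.1 hβmem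
        have hβ0 : β ≠ 0 := Finset.ne_of_mem_erase hβ
        have hs1 : 1 ≤ ∑ i, β i := by
          obtain ⟨i0, _, hi0⟩ := exists_min_nonzero hβ0
          calc 1 ≤ β i0 := Nat.one_le_iff_ne_zero.2 hi0
            _ ≤ ∑ i, β i := Finset.single_le_sum (fun i _ => Nat.zero_le _)
                (Finset.mem_univ i0)
        have hsm : ∑ i, β i ≤ m := by
          rw [← hm]
          exact Finset.sum_le_sum (fun i _ => hβle i)
        have hab : ∑ i, (α - β : Fin n → ℕ) i = m - ∑ i, β i := by
          have := sum_sub hβle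
          omega
        have hIHβ := IH (m - ∑ i, β i) (by omega) (α - β) hab
        obtain ⟨j, hjmem, hjeq⟩ := Finset.exists_mem_eq_sup'
          (Finset.nonempty_range_iff.mpr (Nat.succ_ne_zero (m - ∑ i, β i)))
          (fun j => ((Nat.factorial (m - (∑ i, β i) - j) : ℝ)) ^ ρ * K ^ j * D ^ (j + 1))
        have hjm : j ≤ m - ∑ i, β i := Nat.lt_succ_iff.1 (Finset.mem_range.1 hjmem)
        -- core inequality
        have hqβpos : (0:ℝ) < ((∏ i, (β i).factorial : ℕ) : ℝ) := by
          exact_mod_cast Nat.prod_factorial_pos _ _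
        have hnat : (∏ i, (β i).factorial) * (m - (∑ i, β i) - j).factorial ≤
            2 ^ (∑ i, β i) * (m - 1 - j).factorial :=
          key_fact hs1 (by omega) (prod_fact_le_fact_sum β)
        have h1 : ((∏ i, (β i).factorial : ℕ) : ℝ) ^ ρ *
              ((Nat.factorial (m - (∑ i, β i) - j) : ℝ)) ^ ρ ≤
            ((2:ℝ) ^ ρ) ^ (∑ i, β i) * ((Nat.factorial (m - 1 - j) : ℝ)) ^ ρ := by
          rw [← Real.mul_rpow (le_of_lt hqβpos) (by positivity),
            ← two_pow_rpow (∑ i, β i) ρ,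
            ← Real.mul_rpow (by positivity) (by positivity)]
          refine Real.rpow_le_rpow (by positivity) ?_ hρ0
          exact_mod_cast hnat
        have hj1mem : j + 1 ∈ Finset.range (m + 1) := Finset.mem_range.2 (by omega)
        have hle1 : ((Nat.factorial (m - (j + 1)) : ℝ)) ^ ρ * K ^ (j + 1) *
            D ^ ((j + 1) + 1) ≤ Msup := by
          rw [hMdef]
          exact Finset.le_sup'
            (f := fun j => ((Nat.factorial (m - j) : ℝ)) ^ ρ * K ^ j * D ^ (j + 1)) hj1mem
        have hmm : m - 1 - j = m - (j + 1) := by omega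
        have hcore : K * D * ((∏ i, (β i).factorial : ℕ) : ℝ) ^ ρ *
            (((Nat.factorial (m - (∑ i, β i) - j) : ℝ)) ^ ρ * K ^ j * D ^ (j + 1)) ≤
            ((2:ℝ) ^ ρ) ^ (∑ i, β i) * Msup := by
          calc K * D * ((∏ i, (β i).factorial : ℕ) : ℝ) ^ ρ *
                (((Nat.factorial (m - (∑ i, β i) - j) : ℝ)) ^ ρ * K ^ j * D ^ (j + 1))
              = (((∏ i, (β i).factorial : ℕ) : ℝ) ^ ρ *
                  ((Nat.factorial (m - (∑ i, β i) - j) : ℝ)) ^ ρ) *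
                  (K ^ (j + 1) * D ^ ((j + 1) + 1)) := by ring
            _ ≤ (((2:ℝ) ^ ρ) ^ (∑ i, β i) * ((Nat.factorial (m - 1 - j) : ℝ)) ^ ρ) *
                  (K ^ (j + 1) * D ^ ((j + 1) + 1)) := by
                refine mul_le_mul_of_nonneg_right h1 ?_
                positivity
            _ = ((2:ℝ) ^ ρ) ^ (∑ i, β i) *
                  (((Nat.factorial (m - (j + 1)) : ℝ)) ^ ρ * K ^ (j + 1) *
                    D ^ ((j + 1) + 1)) := by rw [hmm]; ring
            _ ≤ ((2:ℝ) ^ ρ) ^ (∑ i, β i) * Msup := by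
                refine mul_le_mul_of_nonneg_left hle1 ?_
                positivity
        -- combinatorial identity
        have hccnat : (∏ i, (α i).choose (β i)) * (∏ i, (β i).factorial) *
            (∏ i, ((α - β : Fin n → ℕ) i).factorial) = ∏ i, (α i).factorial := by
          rw [← Finset.prod_mul_distrib, ← Finset.prod_mul_distrib]
          exact Finset.prod_congr rfl fun i _ =>
            Nat.choose_mul_factorial_mul_factorial (hβle i)
        have hcc : ((∏ i, (α i).choose (β i) : ℕ) : ℝ) *
            ((∏ i, (β i).factorial : ℕ) : ℝ) *
            ((∏ i, ((α - β : Fin n → ℕ) i).factorial : ℕ) : ℝ)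
            = ((∏ i, (α i).factorial : ℕ) : ℝ) := by
          exact_mod_cast congrArg (Nat.cast : ℕ → ℝ) hccnat
        have hqsplit : ((∏ i, (β i).factorial : ℕ) : ℝ) ^ (ρ + 1)
            = ((∏ i, (β i).factorial : ℕ) : ℝ) ^ ρ *
              ((∏ i, (β i).factorial : ℕ) : ℝ) := by
          rw [Real.rpow_add hqβpos, Real.rpow_one]
        -- assemble
        calc ((∏ j, (α j).choose (β j) : ℕ) : ℝ) * |mpderiv β l I| *
              |mpderiv (α - β) (fun x => (l x)⁻¹) I| * D
            ≤ ((∏ j, (α j).choose (β j) : ℕ) : ℝ) *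
                (K * (C₁ ^ (∑ i, β i) * ((∏ i, (β i).factorial : ℕ) : ℝ) ^ (ρ + 1))) *
                (C₀ ^ ((m - ∑ i, β i) + 1) *
                  ((∏ i, ((α - β : Fin n → ℕ) i).factorial : ℕ) : ℝ) *
                  (Finset.range ((m - ∑ i, β i) + 1)).sup'
                    (Finset.nonempty_range_iff.mpr (Nat.succ_ne_zero _))
                    (fun j => ((Nat.factorial (m - (∑ i, β i) - j) : ℝ)) ^ ρ *
                      K ^ j * D ^ (j + 1))) * D := by
              have hccnn : (0:ℝ) ≤ ((∏ j, (α j).choose (β j) : ℕ) : ℝ) := by positivity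
              have hBlnn : (0:ℝ) ≤ K *
                  (C₁ ^ (∑ i, β i) * ((∏ i, (β i).factorial : ℕ) : ℝ) ^ (ρ + 1)) := by
                positivity
              have inner1 := mul_le_mul_of_nonneg_left (hlder β) hccnn
              have inner2 := mul_le_mul inner1 hIHβ (abs_nonneg _)
                (mul_nonneg hccnn hBlnn)
              exact mul_le_mul_of_nonneg_right inner2 (le_of_lt hD0)
          _ = (((∏ j, (α j).choose (β j) : ℕ) : ℝ) *
                ((∏ i, (β i).factorial : ℕ) : ℝ) *
                ((∏ i, ((α - β : Fin n → ℕ) i).factorial : ℕ) : ℝ)) *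
                (C₁ ^ (∑ i, β i) * C₀ ^ ((m - ∑ i, β i) + 1)) *
                (K * D * ((∏ i, (β i).factorial : ℕ) : ℝ) ^ ρ *
                  (((Nat.factorial (m - (∑ i, β i) - j) : ℝ)) ^ ρ * K ^ j *
                    D ^ (j + 1))) := by
              rw [← hjeq, hqsplit]
              ring
          _ ≤ (((∏ i, (α i).factorial : ℕ) : ℝ)) *
                (C₁ ^ (∑ i, β i) * C₀ ^ ((m - ∑ i, β i) + 1)) *
                (((2:ℝ) ^ ρ) ^ (∑ i, β i) * Msup) := by
              rw [hcc]
              refine mul_le_mul_of_nonneg_left hcore ?_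
              positivity
          _ = ((∏ i, (α i).factorial : ℕ) : ℝ) * Msup *
                (C₂ ^ (∑ i, β i) * C₀ ^ (m - (∑ i, β i) + 1)) := by
              rw [hC₂def, mul_pow]
              ring
      -- sum of the geometric factors
      have hCfrac : C₂ / C₀ ≤ 1 / 2 := by
        rw [div_le_div_iff₀ hC₀pos (by norm_num)]
        linarith
      have hCfrac0 : 0 ≤ C₂ / C₀ := le_of_lt (div_pos hC₂pos hC₀pos)
      have hsumC : ∑ β ∈ (Finset.Iic α).erase 0,
          C₂ ^ (∑ i, β i) * C₀ ^ (m - (∑ i, β i) + 1) ≤ κ * C₀ ^ (m + 1) := by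
        have hperβ : ∀ β ∈ (Finset.Iic α).erase 0,
            C₂ ^ (∑ i, β i) * C₀ ^ (m - (∑ i, β i) + 1) ≤
              C₀ ^ (m + 1) * (2 * (C₂ / C₀)) * ((1:ℝ)/2) ^ (∑ i, β i) := by
          intro β hβ
          have hβmem : β ∈ Finset.Iic α := Finset.mem_of_mem_erase hβ
          have hβle : β ≤ α := Finset.mem_Iic.1 hβmem
          have hβ0 : β ≠ 0 := Finset.ne_of_mem_erase hβ
          have hs1 : 1 ≤ ∑ i, β i := by
            obtain ⟨i0, _, hi0⟩ := exists_min_nonzero hβ0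
            calc 1 ≤ β i0 := Nat.one_le_iff_ne_zero.2 hi0
              _ ≤ ∑ i, β i := Finset.single_le_sum (fun i _ => Nat.zero_le _)
                  (Finset.mem_univ i0)
          have hsm : ∑ i, β i ≤ m := by
            rw [← hm]
            exact Finset.sum_le_sum (fun i _ => hβle i)
          have hexp : m - (∑ i, β i) + 1 = (m + 1) - (∑ i, β i) := by omega
          have hrw : C₂ ^ (∑ i, β i) * C₀ ^ (m - (∑ i, β i) + 1)
              = C₀ ^ (m + 1) * (C₂ / C₀) ^ (∑ i, β i) := by
            rw [hexp, pow_sub₀ C₀ (ne_of_gt hC₀pos) (by omega), div_pow]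
            field_simp
          rw [hrw]
          have hps := pow_small hCfrac0 hCfrac hs1
          calc C₀ ^ (m + 1) * (C₂ / C₀) ^ (∑ i, β i)
              ≤ C₀ ^ (m + 1) * (2 * (C₂ / C₀) * ((1:ℝ)/2) ^ (∑ i, β i)) :=
                mul_le_mul_of_nonneg_left hps (by positivity)
            _ = C₀ ^ (m + 1) * (2 * (C₂ / C₀)) * ((1:ℝ)/2) ^ (∑ i, β i) := by ring
        have hgeom : ∑ β ∈ (Finset.Iic α).erase 0, ((1:ℝ)/2) ^ (∑ i, β i) ≤ 2 ^ n := by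
          refine le_trans (Finset.sum_le_sum_of_subset_of_nonneg
            (Finset.erase_subset _ _) (fun β _ _ => by positivity)) ?_
          exact geom_pi_sum_le α
        have h2n : C₀ ^ (m + 1) * (2 * (C₂ / C₀)) * (2:ℝ) ^ n ≤ κ * C₀ ^ (m + 1) := by
          have hkey : 2 * (C₂ / C₀) * (2:ℝ) ^ n ≤ κ := by
            have h1 : (2:ℝ) ^ (n + 1) * C₂ ≤ κ * C₀ := by
              calc (2:ℝ) ^ (n + 1) * C₂ = κ * ((2:ℝ) ^ (n+1) * C₂ / κ) := by
                    field_simp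
                _ ≤ κ * C₀ := mul_le_mul_of_nonneg_left hC₀2 (le_of_lt hκ)
            have hre : 2 * (C₂ / C₀) * (2:ℝ) ^ n = (2:ℝ) ^ (n + 1) * C₂ / C₀ := by
              ring
            rw [hre, div_le_iff₀ hC₀pos]
            exact h1
          calc C₀ ^ (m + 1) * (2 * (C₂ / C₀)) * (2:ℝ) ^ n
              = C₀ ^ (m + 1) * (2 * (C₂ / C₀) * (2:ℝ) ^ n) := by ring
            _ ≤ C₀ ^ (m + 1) * κ := mul_le_mul_of_nonneg_left hkey (by positivity)
            _ = κ * C₀ ^ (m + 1) := mul_comm _ _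
        calc ∑ β ∈ (Finset.Iic α).erase 0, C₂ ^ (∑ i, β i) * C₀ ^ (m - (∑ i, β i) + 1)
            ≤ ∑ β ∈ (Finset.Iic α).erase 0,
                C₀ ^ (m + 1) * (2 * (C₂ / C₀)) * ((1:ℝ)/2) ^ (∑ i, β i) :=
              Finset.sum_le_sum hperβ
          _ = C₀ ^ (m + 1) * (2 * (C₂ / C₀)) *
                ∑ β ∈ (Finset.Iic α).erase 0, ((1:ℝ)/2) ^ (∑ i, β i) := by
              rw [Finset.mul_sum]
          _ ≤ C₀ ^ (m + 1) * (2 * (C₂ / C₀)) * (2:ℝ) ^ n := by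
              refine mul_le_mul_of_nonneg_left hgeom ?_
              positivity
          _ ≤ κ * C₀ ^ (m + 1) := h2n
      -- final assembly
      have hRest : |Rest| * D ≤ ((∏ i, (α i).factorial : ℕ) : ℝ) * Msup *
          (κ * C₀ ^ (m + 1)) := by
        have habs : |Rest| ≤ ∑ β ∈ (Finset.Iic α).erase 0,
            ((∏ j, (α j).choose (β j) : ℕ) : ℝ) * |mpderiv β l I| *
              |mpderiv (α - β) (fun x => (l x)⁻¹) I| := by
          rw [hRdef]
          refine le_trans (Finset.abs_sum_le_sum_abs _ _) ?_
          refine Finset.sum_le_sum (fun β _ => ?_)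
          rw [abs_mul, abs_mul, Nat.abs_cast, mul_assoc]
        calc |Rest| * D
            ≤ (∑ β ∈ (Finset.Iic α).erase 0,
                ((∏ j, (α j).choose (β j) : ℕ) : ℝ) * |mpderiv β l I| *
                  |mpderiv (α - β) (fun x => (l x)⁻¹) I|) * D :=
              mul_le_mul_of_nonneg_right habs (le_of_lt hD0)
          _ = ∑ β ∈ (Finset.Iic α).erase 0,
                ((∏ j, (α j).choose (β j) : ℕ) : ℝ) * |mpderiv β l I| *
                  |mpderiv (α - β) (fun x => (l x)⁻¹) I| * D := by
              rw [Finset.sum_mul]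
          _ ≤ ∑ β ∈ (Finset.Iic α).erase 0,
                ((∏ i, (α i).factorial : ℕ) : ℝ) * Msup *
                  (C₂ ^ (∑ i, β i) * C₀ ^ (m - (∑ i, β i) + 1)) :=
              Finset.sum_le_sum hterm
          _ = ((∏ i, (α i).factorial : ℕ) : ℝ) * Msup *
                ∑ β ∈ (Finset.Iic α).erase 0,
                  C₂ ^ (∑ i, β i) * C₀ ^ (m - (∑ i, β i) + 1) := by
              rw [Finset.mul_sum]
          _ ≤ ((∏ i, (α i).factorial : ℕ) : ℝ) * Msup * (κ * C₀ ^ (m + 1)) := by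
              refine mul_le_mul_of_nonneg_left hsumC ?_
              have hq : (0:ℝ) ≤ ((∏ i, (α i).factorial : ℕ) : ℝ) := by positivity
              positivity
      calc |mpderiv α (fun x => (l x)⁻¹) I|
          ≤ D / κ * |Rest| := hX
        _ = 1 / κ * (|Rest| * D) := by ring
        _ ≤ 1 / κ * (((∏ i, (α i).factorial : ℕ) : ℝ) * Msup * (κ * C₀ ^ (m + 1))) := by
            refine mul_le_mul_of_nonneg_left hRest ?_
            positivity
        _ = C₀ ^ (m + 1) * ((∏ i, (α i).factorial : ℕ) : ℝ) * Msup := by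
            field_simp

end SDB

theorem small_divisor_derivative_bound (n : ℕ) (E : Set (Fin n → ℝ))
    (ω : (Fin n → ℝ) → (Fin n → ℝ)) (ρ κ C₁ : ℝ) (Δ : ℝ → ℝ)
    (hρ : 1 ≤ ρ) (hκ : 0 < κ) (hC₁ : 0 < C₁)
    (hΔ1 : ∀ t ≥ (0:ℝ), 1 ≤ Δ t) (hΔmono : MonotoneOn Δ (Set.Ici 0))
    (hsmooth : ∀ j : Fin n, ContDiff ℝ (⊤ : ℕ∞) (fun I => ω I j))
    (hder : ∀ (α : Fin n → ℕ) (j : Fin n), ∀ I ∈ E,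
      |mpderiv α (fun I => ω I j) I| ≤
        C₁ ^ (∑ i, α i) * (((∏ i, Nat.factorial (α i)) : ℕ) : ℝ) ^ (ρ + 1))
    (hsd : ∀ I ∈ E, ∀ k : Fin n → ℤ, k ≠ 0 →
      κ / Δ (((∑ i, |k i| : ℤ) : ℝ)) ≤ |∑ j, ω I j * (k j : ℝ)|) :
    ∃ C₀ > (0:ℝ), ∀ I ∈ E, ∀ k : Fin n → ℤ, k ≠ 0 → ∀ α : Fin n → ℕ,
      |mpderiv α (fun I => (∑ j, ω I j * (k j : ℝ))⁻¹) I| ≤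
        C₀ ^ ((∑ i, α i) + 1) * (((∏ i, Nat.factorial (α i)) : ℕ) : ℝ) *
          (Finset.range ((∑ i, α i) + 1)).sup'
            (Finset.nonempty_range_iff.mpr (Nat.succ_ne_zero _))
            (fun j => ((Nat.factorial ((∑ i, α i) - j) : ℝ)) ^ ρ *
              (((∑ i, |k i| : ℤ) : ℝ)) ^ j *
              (Δ (((∑ i, |k i| : ℤ) : ℝ))) ^ (j + 1)) := by
  classical
  set C₂ : ℝ := C₁ * 2 ^ ρ with hC₂def
  set C₀ : ℝ := max (2 * C₂) (max (2 ^ (n + 1) * C₂ / κ) (1 / κ)) with hC₀def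
  have h2ρ : (0:ℝ) < 2 ^ ρ := Real.rpow_pos_of_pos two_pos ρ
  have hC₂pos : 0 < C₂ := mul_pos hC₁ h2ρ
  have hC₀pos : 0 < C₀ := lt_of_lt_of_le (by positivity) (le_max_left _ _)
  refine ⟨C₀, hC₀pos, ?_⟩
  intro I hI k hk α
  set K : ℝ := ((∑ i, |k i| : ℤ) : ℝ) with hKdef
  have hK1 : 1 ≤ K := by
    have hex : ∃ i, k i ≠ 0 := by
      by_contra hc
      push_neg at hc
      exact hk (funext hc)
    obtain ⟨i0, hi0⟩ := hex
    have h1 : (1:ℤ) ≤ ∑ i, |k i| := by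
      calc (1:ℤ) ≤ |k i0| := Int.one_le_abs (by simpa using hi0)
        _ ≤ ∑ i, |k i| := Finset.single_le_sum
            (fun i _ => abs_nonneg (k i)) (Finset.mem_univ i0)
    rw [hKdef]
    exact_mod_cast h1
  have hK0 : (0:ℝ) ≤ K := le_trans zero_le_one hK1
  set D : ℝ := Δ K with hDdef
  have hD1 : 1 ≤ D := hΔ1 K hK0
  set l : (Fin n → ℝ) → ℝ := fun x => ∑ j, ω x j * (k j : ℝ) with hldef
  have hlsmooth : ContDiff ℝ (⊤ : ℕ∞) l := by
    rw [hldef]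
    exact ContDiff.sum fun j _ => (hsmooth j).mul contDiff_const
  set U : Set (Fin n → ℝ) := {x | l x ≠ 0} with hUdef
  have hUopen : IsOpen U := by
    rw [hUdef]
    exact isOpen_compl_iff.2 (isClosed_eq hlsmooth.continuous continuous_const)
  have hU0 : ∀ x ∈ U, l x ≠ 0 := fun x hx => hx
  have hlI : κ / D ≤ |l I| := hsd I hI k hk
  have hIU : I ∈ U := by
    have hκD : 0 < κ / D := div_pos hκ (lt_of_lt_of_le one_pos hD1)
    intro hzero
    rw [hzero] at hlI
    simp only [abs_zero] at hlI
    linarith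
  -- derivative bounds of l at I
  have hlder : ∀ β : Fin n → ℕ, |mpderiv β l I| ≤
      K * (C₁ ^ (∑ i, β i) * ((∏ i, (β i).factorial : ℕ) : ℝ) ^ (ρ + 1)) := by
    intro β
    have hlcomm : l = fun x => ∑ j, (k j : ℝ) * ω x j := by
      rw [hldef]
      funext x
      exact Finset.sum_congr rfl fun j _ => mul_comm _ _
    have hrep : mpderiv β l I = ∑ j, (k j : ℝ) * mpderiv β (fun x => ω x j) I := by
      rw [hlcomm]
      exact SDB.mpderiv_sum isOpen_univ Finset.univ (fun j => (k j : ℝ))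
        (fun j => fun x => ω x j) (fun j _ => (hsmooth j).contDiffOn) β
        (Set.mem_univ I)
    rw [hrep]
    have hKsum : K = ∑ j, |(k j : ℝ)| := by
      rw [hKdef]
      push_cast
      rfl
    calc |∑ j, (k j : ℝ) * mpderiv β (fun x => ω x j) I|
        ≤ ∑ j, |(k j : ℝ) * mpderiv β (fun x => ω x j) I| :=
          Finset.abs_sum_le_sum_abs _ _
      _ = ∑ j, |(k j : ℝ)| * |mpderiv β (fun x => ω x j) I| := by
          refine Finset.sum_congr rfl fun j _ => abs_mul _ _
      _ ≤ ∑ j, |(k j : ℝ)| *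
            (C₁ ^ (∑ i, β i) * ((∏ i, (β i).factorial : ℕ) : ℝ) ^ (ρ + 1)) := by
          refine Finset.sum_le_sum fun j _ => ?_
          exact mul_le_mul_of_nonneg_left (hder β j I hI) (abs_nonneg _)
      _ = (∑ j, |(k j : ℝ)|) *
            (C₁ ^ (∑ i, β i) * ((∏ i, (β i).factorial : ℕ) : ℝ) ^ (ρ + 1)) := by
          rw [Finset.sum_mul]
      _ = K * (C₁ ^ (∑ i, β i) * ((∏ i, (β i).factorial : ℕ) : ℝ) ^ (ρ + 1)) := by
          rw [hKsum]
  have hmain := SDB.inverse_bound hρ hκ hC₁ hC₂def hC₀pos (le_max_left _ _)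
    (le_trans (le_max_left _ _) (le_max_right _ _))
    (le_trans (le_max_right _ _) (le_max_right _ _)) hK1 hD1 hUopen
    hlsmooth.contDiffOn hU0 hIU hlI hlder (∑ i, α i) α rfl
  have hfuneq : (fun I => (∑ j, ω I j * (k j : ℝ))⁻¹) = fun x => (l x)⁻¹ := rfl
  rw [hfuneq]
  exact hmain
end

section
/- Let μ ≥ 8, λ ≥ 8 be reals. There exists M > 0 such that for all natural numbers x₁, x₂, y₁, y₂ and reals p, q ≥ 1: binom(x₁+y₁, x₁)^{7/6} · binom(x₂+y₂, x₂)^{7/6} · Γ(μx₁ + λx₂ + p) · Γ(μy₁ + λy₂ + q) ≤ M · Γ(μ(x₁+y₁) + λ(x₂+y₂) + p + q) · B(p,q)^{1/3}. -/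
set_option maxHeartbeats 2000000
open MeasureTheory Set Nat
open scoped ENNReal


noncomputable def Bf (a b : ℝ) : ℝ := Real.Gamma a * Real.Gamma b / Real.Gamma (a + b)

lemma Bf_pos {a b : ℝ} (ha : 0 < a) (hb : 0 < b) : 0 < Bf a b :=
  div_pos (mul_pos (Real.Gamma_pos_of_pos ha) (Real.Gamma_pos_of_pos hb))
    (Real.Gamma_pos_of_pos (by linarith))

lemma cpow_eq_ofReal {x : ℝ} (hx : 0 ≤ x) (a : ℝ) :
    (x : ℂ) ^ ((a : ℂ) - 1) = ((x ^ (a - 1) : ℝ) : ℂ) := by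
  rw [Complex.ofReal_cpow hx]
  push_cast
  ring_nf

lemma beta_integrand_eqOn (a b : ℝ) :
    Set.EqOn (fun x : ℝ => (x : ℂ) ^ ((a : ℂ) - 1) * ((1 : ℂ) - x) ^ ((b : ℂ) - 1))
      (fun x : ℝ => ((x ^ (a - 1) * (1 - x) ^ (b - 1) : ℝ) : ℂ)) (Set.uIcc (0:ℝ) 1) := by
  intro x hx
  rw [Set.uIcc_of_le (by norm_num : (0:ℝ) ≤ 1)] at hx
  have h1 : (0:ℝ) ≤ x := hx.1
  have h2 : (0:ℝ) ≤ 1 - x := by linarith [hx.2]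
  simp only
  rw [cpow_eq_ofReal h1, show ((1:ℂ) - x) = ((1 - x : ℝ) : ℂ) by push_cast; ring,
    cpow_eq_ofReal h2]
  push_cast
  ring

lemma beta_repr {a b : ℝ} (ha : 0 < a) (hb : 0 < b) :
    ∫ t in (0:ℝ)..1, t ^ (a - 1) * (1 - t) ^ (b - 1) = Bf a b := by
  have hC := Complex.Gamma_mul_Gamma_eq_betaIntegral (s := (a:ℂ)) (t := (b:ℂ))
    (by simpa using ha) (by simpa using hb)
  have hbeta : Complex.betaIntegral a b
      = ((∫ t in (0:ℝ)..1, t ^ (a - 1) * (1 - t) ^ (b - 1) : ℝ) : ℂ) := by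
    rw [Complex.betaIntegral]
    rw [intervalIntegral.integral_congr (beta_integrand_eqOn a b)]
    exact intervalIntegral.integral_ofReal
  have hab : ((a:ℂ) + b) = ((a + b : ℝ) : ℂ) := by push_cast; ring
  rw [hbeta, hab, Complex.Gamma_ofReal, Complex.Gamma_ofReal, Complex.Gamma_ofReal] at hC
  have hne : Real.Gamma (a + b) ≠ 0 := (Real.Gamma_pos_of_pos (by linarith)).ne'
  have : ((Real.Gamma a * Real.Gamma b : ℝ) : ℂ)
      = ((Real.Gamma (a + b) * ∫ t in (0:ℝ)..1, t ^ (a - 1) * (1 - t) ^ (b - 1) : ℝ) : ℂ) := by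
    push_cast; rw [hC]
  have h2 := Complex.ofReal_injective this
  rw [Bf, eq_div_iff hne]
  linarith [h2]

lemma beta_integrable {a b : ℝ} (ha : 0 < a) (hb : 0 < b) :
    IntervalIntegrable (fun t : ℝ => t ^ (a - 1) * (1 - t) ^ (b - 1)) volume 0 1 := by
  have h := Complex.betaIntegral_convergent (u := (a:ℂ)) (v := (b:ℂ))
    (by simpa using ha) (by simpa using hb)
  have h2 : IntervalIntegrable
      (fun x : ℝ => ((x ^ (a - 1) * (1 - x) ^ (b - 1) : ℝ) : ℂ)) volume 0 1 := by
    rw [intervalIntegrable_iff] at h ⊢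
    refine h.congr_fun (fun x hx => ?_) measurableSet_uIoc
    exact beta_integrand_eqOn a b (uIoc_subset_uIcc hx)
  have h3 := h2.norm
  rw [intervalIntegrable_iff] at h3 ⊢
  refine h3.congr_fun (fun x hx => ?_) measurableSet_uIoc
  rw [Set.uIoc_of_le (by norm_num : (0:ℝ) ≤ 1)] at hx
  have : (0:ℝ) ≤ x ^ (a - 1) * (1 - x) ^ (b - 1) := by
    have h1 : (0:ℝ) ≤ x := hx.1.le
    have h2 : (0:ℝ) ≤ 1 - x := by linarith [hx.2]
    positivity
  simp only [Complex.norm_real]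
  exact abs_of_nonneg this


noncomputable def Lb (a b : ℝ) : ℝ≥0∞ :=
  ∫⁻ t in Ioo (0:ℝ) 1, ENNReal.ofReal (t ^ (a - 1) * (1 - t) ^ (b - 1))

lemma Lb_eq {a b : ℝ} (ha : 0 < a) (hb : 0 < b) : Lb a b = ENNReal.ofReal (Bf a b) := by
  rw [Lb, setLIntegral_congr (Ioo_ae_eq_Ioc (μ := volume) (a := (0:ℝ)) (b := 1))]
  have hint : IntegrableOn (fun t : ℝ => t ^ (a - 1) * (1 - t) ^ (b - 1)) (Ioc 0 1) volume := by
    have := beta_integrable ha hb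
    rwa [intervalIntegrable_iff_integrableOn_Ioc_of_le (by norm_num)] at this
  rw [← ofReal_integral_eq_lintegral_ofReal hint ?_]
  · congr 1
    rw [← beta_repr ha hb, intervalIntegral.integral_of_le (by norm_num : (0:ℝ) ≤ 1)]
  · filter_upwards [ae_restrict_mem measurableSet_Ioc] with t ht
    have h1 : (0:ℝ) ≤ t := ht.1.le
    have h2 : (0:ℝ) ≤ 1 - t := by linarith [ht.2]
    positivity

lemma Bf_mono {a b a' b' : ℝ} (ha : 0 < a) (hb : 0 < b) (ha' : a ≤ a') (hb' : b ≤ b') :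
    Bf a' b' ≤ Bf a b := by
  have hL : Lb a' b' ≤ Lb a b := by
    refine lintegral_mono_ae ?_
    filter_upwards [ae_restrict_mem measurableSet_Ioo] with t ht
    refine ENNReal.ofReal_le_ofReal (mul_le_mul ?_ ?_
      (Real.rpow_nonneg (by linarith [ht.2]) _) (Real.rpow_nonneg ht.1.le _))
    · exact Real.rpow_le_rpow_of_exponent_ge ht.1 ht.2.le (by linarith)
    · exact Real.rpow_le_rpow_of_exponent_ge (by linarith [ht.2]) (by linarith [ht.1]) (by linarith)
  rw [Lb_eq ha hb, Lb_eq (by linarith) (by linarith)] at hL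
  exact (ENNReal.ofReal_le_ofReal_iff (Bf_pos ha hb).le).mp hL

lemma Bf_holder3 {a₁ a₂ a₃ b₁ b₂ b₃ w₁ w₂ w₃ : ℝ}
    (ha₁ : 0 < a₁) (ha₂ : 0 < a₂) (ha₃ : 0 < a₃)
    (hb₁ : 0 < b₁) (hb₂ : 0 < b₂) (hb₃ : 0 < b₃)
    (hw₁ : 0 ≤ w₁) (hw₂ : 0 ≤ w₂) (hw₃ : 0 ≤ w₃) (hw : w₁ + w₂ + w₃ = 1)
    (hA : 0 < w₁ * a₁ + w₂ * a₂ + w₃ * a₃) (hB : 0 < w₁ * b₁ + w₂ * b₂ + w₃ * b₃) :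
    Bf (w₁ * a₁ + w₂ * a₂ + w₃ * a₃) (w₁ * b₁ + w₂ * b₂ + w₃ * b₃)
      ≤ Bf a₁ b₁ ^ w₁ * Bf a₂ b₂ ^ w₂ * Bf a₃ b₃ ^ w₃ := by
  set A := w₁ * a₁ + w₂ * a₂ + w₃ * a₃
  set B := w₁ * b₁ + w₂ * b₂ + w₃ * b₃
  have key : Lb A B ≤ Lb a₁ b₁ ^ w₁ * Lb a₂ b₂ ^ w₂ * Lb a₃ b₃ ^ w₃ := by
    set av : Fin 3 → ℝ := ![a₁, a₂, a₃] with hav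
    set bv : Fin 3 → ℝ := ![b₁, b₂, b₃] with hbv
    set f : Fin 3 → ℝ → ℝ≥0∞ :=
      fun i t => ENNReal.ofReal (t ^ (av i - 1) * (1-t) ^ (bv i - 1)) with hf
    set p : Fin 3 → ℝ := ![w₁, w₂, w₃] with hp
    have hmeas : ∀ i ∈ Finset.univ, AEMeasurable (f i) (volume.restrict (Ioo (0:ℝ) 1)) := by
      intro i _
      simp only [hf]
      fun_prop
    have hpsum : ∑ i ∈ Finset.univ, p i = 1 := by
      simp [hp, Fin.sum_univ_three, hw]
    have hpnn : ∀ i ∈ Finset.univ, 0 ≤ p i := by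
      intro i _; fin_cases i <;> simpa [hp]
    have H := ENNReal.lintegral_prod_norm_pow_le (μ := volume.restrict (Ioo (0:ℝ) 1))
      Finset.univ hmeas hpsum hpnn
    have hptw : ∀ t ∈ Ioo (0:ℝ) 1,
        ENNReal.ofReal (t ^ (A-1) * (1-t) ^ (B-1)) = ∏ i ∈ Finset.univ, f i t ^ p i := by
      intro t ht
      have ht0 : (0:ℝ) < t := ht.1
      have ht1 : (0:ℝ) < 1 - t := by linarith [ht.2]
      have hreal : t ^ (A-1) * (1-t) ^ (B-1)
          = (t ^ (a₁-1) * (1-t) ^ (b₁-1)) ^ w₁ * (t ^ (a₂-1) * (1-t) ^ (b₂-1)) ^ w₂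
            * (t ^ (a₃-1) * (1-t) ^ (b₃-1)) ^ w₃ := by
        have e1 : A - 1 = (a₁-1)*w₁ + (a₂-1)*w₂ + (a₃-1)*w₃ := by simp only [A]; linarith
        have e2 : B - 1 = (b₁-1)*w₁ + (b₂-1)*w₂ + (b₃-1)*w₃ := by simp only [B]; linarith
        rw [e1, e2, Real.rpow_add ht0, Real.rpow_add ht0, Real.rpow_add ht1, Real.rpow_add ht1,
          Real.rpow_mul ht0.le, Real.rpow_mul ht0.le, Real.rpow_mul ht0.le,
          Real.rpow_mul ht1.le, Real.rpow_mul ht1.le, Real.rpow_mul ht1.le,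
          Real.mul_rpow (Real.rpow_nonneg ht0.le _) (Real.rpow_nonneg ht1.le _),
          Real.mul_rpow (Real.rpow_nonneg ht0.le _) (Real.rpow_nonneg ht1.le _),
          Real.mul_rpow (Real.rpow_nonneg ht0.le _) (Real.rpow_nonneg ht1.le _)]
        ring
      have hnn : ∀ c d : ℝ, (0:ℝ) < t ^ (c - 1) * (1-t) ^ (d - 1) := fun c d =>
        mul_pos (Real.rpow_pos_of_pos ht0 _) (Real.rpow_pos_of_pos ht1 _)
      rw [hreal, Fin.prod_univ_three]
      rw [ENNReal.ofReal_mul (mul_nonneg (Real.rpow_nonneg (hnn a₁ b₁).le _)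
          (Real.rpow_nonneg (hnn a₂ b₂).le _)),
        ENNReal.ofReal_mul (Real.rpow_nonneg (hnn a₁ b₁).le _),
        ENNReal.ofReal_rpow_of_pos (hnn _ _), ENNReal.ofReal_rpow_of_pos (hnn _ _),
        ENNReal.ofReal_rpow_of_pos (hnn _ _)]
      simp [hf, hav, hbv, hp]
    calc Lb A B = ∫⁻ t in Ioo (0:ℝ) 1, ∏ i ∈ Finset.univ, f i t ^ p i := by
          rw [Lb]; exact setLIntegral_congr_fun measurableSet_Ioo
            hptw
      _ ≤ ∏ i ∈ Finset.univ, (∫⁻ t in Ioo (0:ℝ) 1, f i t) ^ p i := H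
      _ = Lb a₁ b₁ ^ w₁ * Lb a₂ b₂ ^ w₂ * Lb a₃ b₃ ^ w₃ := by
          rw [Fin.prod_univ_three, Lb, Lb, Lb]
          simp [hf, hav, hbv, hp]
  rw [Lb_eq hA hB, Lb_eq ha₁ hb₁, Lb_eq ha₂ hb₂, Lb_eq ha₃ hb₃] at key
  have p1 := Bf_pos ha₁ hb₁
  have p2 := Bf_pos ha₂ hb₂
  have p3 := Bf_pos ha₃ hb₃
  rw [ENNReal.ofReal_rpow_of_pos p1, ENNReal.ofReal_rpow_of_pos p2,
    ENNReal.ofReal_rpow_of_pos p3, ← ENNReal.ofReal_mul (by positivity),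
    ← ENNReal.ofReal_mul (by positivity)] at key
  exact (ENNReal.ofReal_le_ofReal_iff (by positivity)).mp key


lemma choose_step (a b c d : ℕ) :
    (a + b).choose a * (c + d).choose c ≤ (a + b + (c + d)).choose (a + c) := by
  conv_rhs => rw [Nat.add_choose_eq]
  exact Finset.single_le_sum (f := fun ij : ℕ × ℕ => (a+b).choose ij.1 * (c+d).choose ij.2)
    (fun i _ => Nat.zero_le _) (a := ((a, c) : ℕ × ℕ)) (Finset.HasAntidiagonal.mem_antidiagonal.mpr rfl)

lemma choose_pow_le (x y n : ℕ) :
    ((x + y).choose x) ^ n ≤ (n * x + n * y).choose (n * x) := by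
  induction n with
  | zero => simp
  | succ n ih =>
    calc ((x + y).choose x) ^ (n+1) = ((x + y).choose x) ^ n * (x + y).choose x := by ring
      _ ≤ (n * x + n * y).choose (n * x) * (x + y).choose x :=
          Nat.mul_le_mul_right _ ih
      _ ≤ (n * x + n * y + (x + y)).choose (n * x + x) := choose_step _ _ _ _
      _ = ((n+1) * x + (n+1) * y).choose ((n+1) * x) := by ring_nf

lemma Gamma_nat_cast {m : ℕ} (hm : 1 ≤ m) : Real.Gamma (m : ℝ) = (((m - 1)! : ℕ) : ℝ) := by
  obtain ⟨a, rfl⟩ := Nat.exists_eq_add_of_le hm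
  have h : 1 + a - 1 = a := by omega
  rw [h, show ((1 + a : ℕ) : ℝ) = (a : ℝ) + 1 by push_cast; ring, Real.Gamma_nat_eq_factorial]

lemma Bf_nat_le {m n : ℕ} (hm : 2 ≤ m) (hn : 2 ≤ n) :
    Bf m n ≤ (((m + n).choose m : ℝ))⁻¹ := by
  have h1 : (1:ℕ) ≤ m := by omega
  have h2 : (1:ℕ) ≤ n := by omega
  have hmn : (1:ℕ) ≤ m + n := by omega
  have hchoose_pos : 0 < (m + n).choose m := Nat.choose_pos (by omega)
  have hfac_pos : (0:ℝ) < (((m + n - 1)! : ℕ) : ℝ) := by positivity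
  rw [Bf, Gamma_nat_cast h1, Gamma_nat_cast h2,
    show ((m:ℝ) + n) = ((m + n : ℕ) : ℝ) by push_cast; ring, Gamma_nat_cast hmn]
  rw [div_le_iff₀ hfac_pos, inv_mul_eq_div, le_div_iff₀ (by positivity)]
  set cho := (m + n).choose m with hcho
  have key : cho * ((m-1)! * (n-1)!) ≤ (m + n - 1)! := by
    have hfact : cho * m ! * n ! = (m + n)! := by
      have := Nat.choose_mul_factorial_mul_factorial (show m ≤ m + n by omega)
      rwa [Nat.add_sub_cancel_left] at this
    have e : cho * ((m-1)! * (n-1)!) * (m * n) = (m + n) * (m + n - 1)! := by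
      rw [Nat.mul_factorial_pred (show m + n ≠ 0 by omega), ← hfact,
        ← Nat.mul_factorial_pred (show m ≠ 0 by omega),
        ← Nat.mul_factorial_pred (show n ≠ 0 by omega)]
      ring
    have hmn2 : m + n ≤ m * n := by nlinarith
    have hle : cho * ((m-1)! * (n-1)!) * (m * n) ≤ (m + n - 1)! * (m * n) := by
      rw [e, Nat.mul_comm ((m + n - 1)!) (m * n)]
      exact Nat.mul_le_mul_right _ hmn2
    exact Nat.le_of_mul_le_mul_right hle (by positivity)
  calc (((m-1)! : ℕ) : ℝ) * ((n-1)! : ℕ) * (cho : ℝ)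
      = ((cho * ((m-1)! * (n-1)!) : ℕ) : ℝ) := by push_cast; ring
    _ ≤ (((m + n - 1)! : ℕ) : ℝ) := Nat.cast_le.mpr key


lemma Bf_one_one : Bf 1 1 = 1 := by
  rw [Bf, Real.Gamma_one, show (1:ℝ) + 1 = 2 by norm_num, Real.Gamma_two]
  norm_num

lemma Bf_le_one {p q : ℝ} (hp : 1 ≤ p) (hq : 1 ≤ q) : Bf p q ≤ 1 := by
  rw [← Bf_one_one]
  exact Bf_mono one_pos one_pos hp hq

lemma helper_bound {ν : ℝ} (hν : 8 ≤ ν) {x y : ℕ} (hx : 1 ≤ x) (hy : 1 ≤ y)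
    {e : ℝ} (he0 : 0 ≤ e) (he : 7/6 ≤ 8 * e) :
    ((x + y).choose x : ℝ) ^ ((7:ℝ)/6) * Bf (ν * x) (ν * y) ^ e ≤ 1 := by
  set c : ℕ := (x + y).choose x with hc
  have hc1 : (1:ℝ) ≤ (c : ℝ) := by
    exact_mod_cast Nat.one_le_iff_ne_zero.mpr (Nat.choose_pos (by omega : x ≤ x + y)).ne'
  have hxR : (1:ℝ) ≤ (x:ℝ) := by exact_mod_cast hx
  have hyR : (1:ℝ) ≤ (y:ℝ) := by exact_mod_cast hy
  have h8x : (0:ℝ) < 8 * x := by linarith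
  have h8y : (0:ℝ) < 8 * y := by linarith
  have step1 : Bf (ν * x) (ν * y) ≤ Bf ((8*x : ℕ) : ℝ) ((8*y : ℕ) : ℝ) := by
    have e1 : ((8*x : ℕ) : ℝ) = 8 * (x:ℝ) := by push_cast; ring
    have e2 : ((8*y : ℕ) : ℝ) = 8 * (y:ℝ) := by push_cast; ring
    rw [e1, e2]
    exact Bf_mono h8x h8y (by nlinarith) (by nlinarith)
  have step2 : Bf ((8*x : ℕ) : ℝ) ((8*y : ℕ) : ℝ) ≤ ((c:ℝ) ^ (8:ℕ))⁻¹ := by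
    refine (Bf_nat_le (by omega) (by omega)).trans ?_
    refine inv_anti₀ (by positivity) ?_
    calc ((c:ℝ) ^ (8:ℕ)) = ((c ^ (8:ℕ) : ℕ) : ℝ) := by push_cast; ring
      _ ≤ (((8*x + 8*y).choose (8*x) : ℕ) : ℝ) := by
          exact_mod_cast choose_pow_le x y 8
  have hBpos : 0 < Bf (ν * x) (ν * y) :=
    Bf_pos (by nlinarith) (by nlinarith)
  have step3 : Bf (ν * x) (ν * y) ^ e ≤ ((c:ℝ) ^ (8:ℕ))⁻¹ ^ e :=
    Real.rpow_le_rpow hBpos.le (step1.trans step2) he0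
  have step4 : ((c:ℝ) ^ (8:ℕ))⁻¹ ^ e = (c:ℝ) ^ (-(8*e)) := by
    rw [← Real.rpow_natCast (c:ℝ) 8, ← Real.rpow_neg (by linarith), ← Real.rpow_mul (by linarith)]
    norm_num
  calc ((c:ℝ)) ^ ((7:ℝ)/6) * Bf (ν * x) (ν * y) ^ e
      ≤ (c:ℝ) ^ ((7:ℝ)/6) * (c:ℝ) ^ (-(8*e)) := by
        rw [← step4]
        exact mul_le_mul_of_nonneg_left step3 (Real.rpow_nonneg (by linarith) _)
    _ = (c:ℝ) ^ ((7:ℝ)/6 + -(8*e)) := (Real.rpow_add (by linarith) _ _).symm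
    _ ≤ 1 := Real.rpow_le_one_of_one_le_of_nonpos hc1 (by linarith)

lemma choose_degen {x y : ℕ} (h : x = 0 ∨ y = 0) : (((x + y).choose x : ℕ) : ℝ) = 1 := by
  rcases h with h | h <;> subst h <;> simp

/-- one active pair: choose^{7/6} * Bf(A, B) ≤ Bf p q ^ (1/2) when the other pair only
adds nonnegative mass. -/
lemma one_pair_bound {ν : ℝ} (hν : 8 ≤ ν) {x y : ℕ} (hx : 1 ≤ x) (hy : 1 ≤ y)
    {p q s t : ℝ} (hp : 1 ≤ p) (hq : 1 ≤ q) (hs : 0 ≤ s) (ht : 0 ≤ t) :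
    ((x + y).choose x : ℝ) ^ ((7:ℝ)/6) * Bf (ν * x + s + p) (ν * y + t + q)
      ≤ Bf p q ^ ((1:ℝ)/3) := by
  have hxR : (1:ℝ) ≤ (x:ℝ) := by exact_mod_cast hx
  have hyR : (1:ℝ) ≤ (y:ℝ) := by exact_mod_cast hy
  have hν0 : (0:ℝ) < ν := by linarith
  have hnp : (0:ℝ) < ν * x := mul_pos hν0 (by linarith)
  have hnq : (0:ℝ) < ν * y := mul_pos hν0 (by linarith)
  have hBpq : 0 < Bf p q := Bf_pos (by linarith) (by linarith)
  have hBpq1 : Bf p q ≤ 1 := Bf_le_one hp hq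
  have hmono : Bf (ν * x + s + p) (ν * y + t + q) ≤ Bf (ν * x + p) (ν * y + q) :=
    Bf_mono (by linarith) (by linarith) (by linarith) (by linarith)
  have hhold : Bf (ν * x + p) (ν * y + q)
      ≤ Bf (2*(ν*x)) (2*(ν*y)) ^ ((1:ℝ)/2) * Bf (2*p) (2*q) ^ ((1:ℝ)/2) := by
    have h := Bf_holder3 (a₁ := 2*(ν*x)) (a₂ := 2*p) (a₃ := 1)
      (b₁ := 2*(ν*y)) (b₂ := 2*q) (b₃ := 1)
      (w₁ := 1/2) (w₂ := 1/2) (w₃ := 0)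
      (by linarith) (by linarith) one_pos (by linarith) (by linarith) one_pos
      (by norm_num) (by norm_num) le_rfl (by norm_num) (by linarith) (by linarith)
    have e1 : (1:ℝ)/2*(2*(ν*x)) + 1/2*(2*p) + 0*1 = ν * x + p := by ring
    have e2 : (1:ℝ)/2*(2*(ν*y)) + 1/2*(2*q) + 0*1 = ν * y + q := by ring
    rw [e1, e2, Real.rpow_zero, mul_one] at h
    exact h
  have hm1 : Bf (2*(ν*x)) (2*(ν*y)) ^ ((1:ℝ)/2) ≤ Bf (ν*x) (ν*y) ^ ((1:ℝ)/2) :=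
    Real.rpow_le_rpow (Bf_pos (by linarith) (by linarith)).le
      (Bf_mono (by linarith) (by linarith) (by linarith) (by linarith)) (by norm_num)
  have hm2 : Bf (2*p) (2*q) ^ ((1:ℝ)/2) ≤ Bf p q ^ ((1:ℝ)/2) :=
    Real.rpow_le_rpow (Bf_pos (by linarith) (by linarith)).le
      (Bf_mono (by linarith) (by linarith) (by linarith) (by linarith)) (by norm_num)
  have hm3 : Bf p q ^ ((1:ℝ)/2) ≤ Bf p q ^ ((1:ℝ)/3) :=
    Real.rpow_le_rpow_of_exponent_ge hBpq hBpq1 (by norm_num)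
  have hkey := helper_bound hν hx hy (e := (1:ℝ)/2) (by norm_num) (by norm_num)
  have hBnu : 0 < Bf (ν*x) (ν*y) := Bf_pos (by linarith) (by linarith)
  calc ((x + y).choose x : ℝ) ^ ((7:ℝ)/6) * Bf (ν * x + s + p) (ν * y + t + q)
      ≤ ((x + y).choose x : ℝ) ^ ((7:ℝ)/6)
        * (Bf (ν*x) (ν*y) ^ ((1:ℝ)/2) * Bf p q ^ ((1:ℝ)/2)) := by
        refine mul_le_mul_of_nonneg_left ?_ (Real.rpow_nonneg (Nat.cast_nonneg _) _)
        refine (hmono.trans hhold).trans ?_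
        exact mul_le_mul hm1 hm2 (Real.rpow_nonneg (Bf_pos (by linarith) (by linarith)).le _)
          (Real.rpow_nonneg hBnu.le _)
    _ = (((x + y).choose x : ℝ) ^ ((7:ℝ)/6) * Bf (ν*x) (ν*y) ^ ((1:ℝ)/2))
        * Bf p q ^ ((1:ℝ)/2) := by ring
    _ ≤ 1 * Bf p q ^ ((1:ℝ)/2) :=
        mul_le_mul_of_nonneg_right hkey (Real.rpow_nonneg hBpq.le _)
    _ = Bf p q ^ ((1:ℝ)/2) := one_mul _
    _ ≤ Bf p q ^ ((1:ℝ)/3) := hm3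

lemma main_ineq {μ lam : ℝ} (hμ : 8 ≤ μ) (hlam : 8 ≤ lam) (x₁ x₂ y₁ y₂ : ℕ) {p q : ℝ}
    (hp : 1 ≤ p) (hq : 1 ≤ q) :
    ((x₁ + y₁).choose x₁ : ℝ) ^ ((7:ℝ)/6) * ((x₂ + y₂).choose x₂ : ℝ) ^ ((7:ℝ)/6) *
      Bf (μ * x₁ + lam * x₂ + p) (μ * y₁ + lam * y₂ + q) ≤ Bf p q ^ ((1:ℝ)/3) := by
  have hx₁0 : (0:ℝ) ≤ (x₁:ℝ) := Nat.cast_nonneg _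
  have hx₂0 : (0:ℝ) ≤ (x₂:ℝ) := Nat.cast_nonneg _
  have hy₁0 : (0:ℝ) ≤ (y₁:ℝ) := Nat.cast_nonneg _
  have hy₂0 : (0:ℝ) ≤ (y₂:ℝ) := Nat.cast_nonneg _
  have hmx1 : (0:ℝ) ≤ μ * x₁ := mul_nonneg (by linarith) hx₁0
  have hmy1 : (0:ℝ) ≤ μ * y₁ := mul_nonneg (by linarith) hy₁0
  have hlx2 : (0:ℝ) ≤ lam * x₂ := mul_nonneg (by linarith) hx₂0
  have hly2 : (0:ℝ) ≤ lam * y₂ := mul_nonneg (by linarith) hy₂0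
  have hBpq : 0 < Bf p q := Bf_pos (by linarith) (by linarith)
  have hBpq1 : Bf p q ≤ 1 := Bf_le_one hp hq
  by_cases h1 : x₁ = 0 ∨ y₁ = 0
  · by_cases h2 : x₂ = 0 ∨ y₂ = 0
    · -- both degenerate
      rw [choose_degen h1, choose_degen h2]
      simp only [Real.one_rpow, one_mul]
      calc Bf (μ * x₁ + lam * x₂ + p) (μ * y₁ + lam * y₂ + q)
          ≤ Bf p q := Bf_mono (by linarith) (by linarith) (by linarith) (by linarith)
        _ = Bf p q ^ (1:ℝ) := (Real.rpow_one _).symm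
        _ ≤ Bf p q ^ ((1:ℝ)/3) :=
            Real.rpow_le_rpow_of_exponent_ge hBpq hBpq1 (by norm_num)
    · -- pair 2 active
      push_neg at h2
      have hx : 1 ≤ x₂ := Nat.one_le_iff_ne_zero.mpr h2.1
      have hy : 1 ≤ y₂ := Nat.one_le_iff_ne_zero.mpr h2.2
      rw [choose_degen h1]
      simp only [Real.one_rpow, one_mul]
      have h := one_pair_bound hlam hx hy hp hq hmx1 hmy1
      calc ((x₂ + y₂).choose x₂ : ℝ) ^ ((7:ℝ)/6)
            * Bf (μ * x₁ + lam * x₂ + p) (μ * y₁ + lam * y₂ + q)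
          = ((x₂ + y₂).choose x₂ : ℝ) ^ ((7:ℝ)/6)
            * Bf (lam * x₂ + μ * x₁ + p) (lam * y₂ + μ * y₁ + q) := by ring_nf
        _ ≤ Bf p q ^ ((1:ℝ)/3) := h
  · by_cases h2 : x₂ = 0 ∨ y₂ = 0
    · -- pair 1 active
      push_neg at h1
      have hx : 1 ≤ x₁ := Nat.one_le_iff_ne_zero.mpr h1.1
      have hy : 1 ≤ y₁ := Nat.one_le_iff_ne_zero.mpr h1.2
      rw [choose_degen h2]
      simp only [Real.one_rpow, mul_one]
      exact one_pair_bound hμ hx hy hp hq hlx2 hly2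
    · -- both active
      push_neg at h1; push_neg at h2
      have hx1 : 1 ≤ x₁ := Nat.one_le_iff_ne_zero.mpr h1.1
      have hy1 : 1 ≤ y₁ := Nat.one_le_iff_ne_zero.mpr h1.2
      have hx2 : 1 ≤ x₂ := Nat.one_le_iff_ne_zero.mpr h2.1
      have hy2 : 1 ≤ y₂ := Nat.one_le_iff_ne_zero.mpr h2.2
      have hx1R : (1:ℝ) ≤ (x₁:ℝ) := by exact_mod_cast hx1
      have hy1R : (1:ℝ) ≤ (y₁:ℝ) := by exact_mod_cast hy1
      have hx2R : (1:ℝ) ≤ (x₂:ℝ) := by exact_mod_cast hx2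
      have hy2R : (1:ℝ) ≤ (y₂:ℝ) := by exact_mod_cast hy2
      have hm1p : (0:ℝ) < μ * (x₁:ℝ) := mul_pos (by linarith) (by linarith)
      have hm2p : (0:ℝ) < μ * (y₁:ℝ) := mul_pos (by linarith) (by linarith)
      have hl1p : (0:ℝ) < lam * (x₂:ℝ) := mul_pos (by linarith) (by linarith)
      have hl2p : (0:ℝ) < lam * (y₂:ℝ) := mul_pos (by linarith) (by linarith)
      have hB1pos : 0 < Bf (μ*x₁) (μ*y₁) := Bf_pos (by linarith) (by linarith)
      have hB2pos : 0 < Bf (lam*x₂) (lam*y₂) := Bf_pos (by linarith) (by linarith)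
      have hhold : Bf (μ * x₁ + lam * x₂ + p) (μ * y₁ + lam * y₂ + q)
          ≤ Bf (3*(μ*x₁)) (3*(μ*y₁)) ^ ((1:ℝ)/3) * Bf (3*(lam*x₂)) (3*(lam*y₂)) ^ ((1:ℝ)/3)
            * Bf (3*p) (3*q) ^ ((1:ℝ)/3) := by
        have h := Bf_holder3 (a₁ := 3*(μ*x₁)) (a₂ := 3*(lam*x₂)) (a₃ := 3*p)
          (b₁ := 3*(μ*y₁)) (b₂ := 3*(lam*y₂)) (b₃ := 3*q)
          (w₁ := 1/3) (w₂ := 1/3) (w₃ := 1/3)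
          (by linarith) (by linarith) (by linarith) (by linarith) (by linarith) (by linarith)
          (by norm_num) (by norm_num) (by norm_num) (by norm_num) (by linarith) (by linarith)
        have e1 : (1:ℝ)/3*(3*(μ*x₁)) + 1/3*(3*(lam*x₂)) + 1/3*(3*p) = μ * x₁ + lam * x₂ + p := by
          ring
        have e2 : (1:ℝ)/3*(3*(μ*y₁)) + 1/3*(3*(lam*y₂)) + 1/3*(3*q) = μ * y₁ + lam * y₂ + q := by
          ring
        rw [e1, e2] at h
        exact h
      have hm1 : Bf (3*(μ*x₁)) (3*(μ*y₁)) ^ ((1:ℝ)/3) ≤ Bf (μ*x₁) (μ*y₁) ^ ((1:ℝ)/3) :=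
        Real.rpow_le_rpow (Bf_pos (by linarith) (by linarith)).le
          (Bf_mono (by linarith) (by linarith) (by linarith) (by linarith)) (by norm_num)
      have hm2 : Bf (3*(lam*x₂)) (3*(lam*y₂)) ^ ((1:ℝ)/3) ≤ Bf (lam*x₂) (lam*y₂) ^ ((1:ℝ)/3) :=
        Real.rpow_le_rpow (Bf_pos (by linarith) (by linarith)).le
          (Bf_mono (by linarith) (by linarith) (by linarith) (by linarith)) (by norm_num)
      have hm3 : Bf (3*p) (3*q) ^ ((1:ℝ)/3) ≤ Bf p q ^ ((1:ℝ)/3) :=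
        Real.rpow_le_rpow (Bf_pos (by linarith) (by linarith)).le
          (Bf_mono (by linarith) (by linarith) (by linarith) (by linarith)) (by norm_num)
      have hkey1 := helper_bound hμ hx1 hy1 (e := (1:ℝ)/3) (by norm_num) (by norm_num)
      have hkey2 := helper_bound hlam hx2 hy2 (e := (1:ℝ)/3) (by norm_num) (by norm_num)
      have hstep : Bf (μ * x₁ + lam * x₂ + p) (μ * y₁ + lam * y₂ + q)
          ≤ Bf (μ*x₁) (μ*y₁) ^ ((1:ℝ)/3) * Bf (lam*x₂) (lam*y₂) ^ ((1:ℝ)/3)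
            * Bf p q ^ ((1:ℝ)/3) := by
        refine hhold.trans ?_
        have hmm : Bf (3*(μ*x₁)) (3*(μ*y₁)) ^ ((1:ℝ)/3) * Bf (3*(lam*x₂)) (3*(lam*y₂)) ^ ((1:ℝ)/3)
            ≤ Bf (μ*x₁) (μ*y₁) ^ ((1:ℝ)/3) * Bf (lam*x₂) (lam*y₂) ^ ((1:ℝ)/3) :=
          mul_le_mul hm1 hm2
            (Real.rpow_nonneg (Bf_pos (by linarith) (by linarith)).le _)
            (Real.rpow_nonneg hB1pos.le _)
        exact mul_le_mul hmm hm3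
          (Real.rpow_nonneg (Bf_pos (by linarith) (by linarith)).le _)
          (mul_nonneg (Real.rpow_nonneg hB1pos.le _) (Real.rpow_nonneg hB2pos.le _))
      calc ((x₁ + y₁).choose x₁ : ℝ) ^ ((7:ℝ)/6) * ((x₂ + y₂).choose x₂ : ℝ) ^ ((7:ℝ)/6)
            * Bf (μ * x₁ + lam * x₂ + p) (μ * y₁ + lam * y₂ + q)
          ≤ ((x₁ + y₁).choose x₁ : ℝ) ^ ((7:ℝ)/6) * ((x₂ + y₂).choose x₂ : ℝ) ^ ((7:ℝ)/6)
            * (Bf (μ*x₁) (μ*y₁) ^ ((1:ℝ)/3) * Bf (lam*x₂) (lam*y₂) ^ ((1:ℝ)/3)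
              * Bf p q ^ ((1:ℝ)/3)) := by
            refine mul_le_mul_of_nonneg_left hstep ?_
            exact mul_nonneg (Real.rpow_nonneg (Nat.cast_nonneg _) _)
              (Real.rpow_nonneg (Nat.cast_nonneg _) _)
        _ = (((x₁ + y₁).choose x₁ : ℝ) ^ ((7:ℝ)/6) * Bf (μ*x₁) (μ*y₁) ^ ((1:ℝ)/3))
            * (((x₂ + y₂).choose x₂ : ℝ) ^ ((7:ℝ)/6) * Bf (lam*x₂) (lam*y₂) ^ ((1:ℝ)/3))
            * Bf p q ^ ((1:ℝ)/3) := by ring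
        _ ≤ 1 * 1 * Bf p q ^ ((1:ℝ)/3) := by
            refine mul_le_mul_of_nonneg_right ?_ (Real.rpow_nonneg hBpq.le _)
            refine mul_le_mul hkey1 hkey2 ?_ zero_le_one
            exact mul_nonneg (Real.rpow_nonneg (Nat.cast_nonneg _) _)
              (Real.rpow_nonneg hB2pos.le _)
        _ = Bf p q ^ ((1:ℝ)/3) := by ring

theorem gamma_product_beta_bound (μ lam : ℝ) (hμ : 8 ≤ μ) (hlam : 8 ≤ lam) :
    ∃ M > (0:ℝ), ∀ x₁ x₂ y₁ y₂ : ℕ, ∀ p q : ℝ, 1 ≤ p → 1 ≤ q →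
      ((Nat.choose (x₁ + y₁) x₁ : ℝ)) ^ ((7:ℝ)/6) *
        ((Nat.choose (x₂ + y₂) x₂ : ℝ)) ^ ((7:ℝ)/6) *
        Real.Gamma (μ * x₁ + lam * x₂ + p) * Real.Gamma (μ * y₁ + lam * y₂ + q)
      ≤ M * Real.Gamma (μ * (x₁ + y₁) + lam * (x₂ + y₂) + p + q) *
          (Real.Gamma p * Real.Gamma q / Real.Gamma (p + q)) ^ ((1:ℝ)/3) := by
  refine ⟨1, one_pos, fun x₁ x₂ y₁ y₂ p q hp hq => ?_⟩
  set A := μ * x₁ + lam * x₂ + p with hA_def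
  set B := μ * y₁ + lam * y₂ + q with hB_def
  have hx₁0 : (0:ℝ) ≤ (x₁:ℝ) := Nat.cast_nonneg _
  have hx₂0 : (0:ℝ) ≤ (x₂:ℝ) := Nat.cast_nonneg _
  have hy₁0 : (0:ℝ) ≤ (y₁:ℝ) := Nat.cast_nonneg _
  have hy₂0 : (0:ℝ) ≤ (y₂:ℝ) := Nat.cast_nonneg _
  have hmx1 : (0:ℝ) ≤ μ * x₁ := mul_nonneg (by linarith) hx₁0
  have hmy1 : (0:ℝ) ≤ μ * y₁ := mul_nonneg (by linarith) hy₁0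
  have hlx2 : (0:ℝ) ≤ lam * x₂ := mul_nonneg (by linarith) hx₂0
  have hly2 : (0:ℝ) ≤ lam * y₂ := mul_nonneg (by linarith) hy₂0
  have hA : (0:ℝ) < A := by rw [hA_def]; linarith
  have hB : (0:ℝ) < B := by rw [hB_def]; linarith
  have hGamma_AB : Real.Gamma A * Real.Gamma B = Real.Gamma (A + B) * Bf A B := by
    have hne : Real.Gamma (A + B) ≠ 0 := (Real.Gamma_pos_of_pos (by linarith)).ne'
    rw [Bf]
    field_simp
  have hGpos : 0 < Real.Gamma (A + B) := Real.Gamma_pos_of_pos (by linarith)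
  have hmain := main_ineq hμ hlam x₁ x₂ y₁ y₂ hp hq
  have hS : μ * ((x₁:ℝ) + (y₁:ℝ)) + lam * ((x₂:ℝ) + (y₂:ℝ)) + p + q = A + B := by
    rw [hA_def, hB_def]; push_cast; ring
  calc ((x₁ + y₁).choose x₁ : ℝ) ^ ((7:ℝ)/6) * ((x₂ + y₂).choose x₂ : ℝ) ^ ((7:ℝ)/6)
        * Real.Gamma A * Real.Gamma B
      = Real.Gamma (A + B) * (((x₁ + y₁).choose x₁ : ℝ) ^ ((7:ℝ)/6)
        * ((x₂ + y₂).choose x₂ : ℝ) ^ ((7:ℝ)/6) * Bf A B) := by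
        rw [mul_assoc, hGamma_AB]; ring
    _ ≤ Real.Gamma (A + B) * (Bf p q ^ ((1:ℝ)/3)) :=
        mul_le_mul_of_nonneg_left hmain hGpos.le
    _ = 1 * Real.Gamma (μ * ((x₁:ℝ) + (y₁:ℝ)) + lam * ((x₂:ℝ) + (y₂:ℝ)) + p + q)
        * (Real.Gamma p * Real.Gamma q / Real.Gamma (p + q)) ^ ((1:ℝ)/3) := by
        rw [hS, Bf]; ring
end
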